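/- arXiv:1809.07645 — 12 statements merged into one kernel-verified Lean document; each statement's English description precedes it below -/
import Mathlib

section
/- Suppose F ∈ F_q[x] has degree d ≥ 1 and for every positive integer k the evaluation map of F on F_{q^k} maps elements of degree exactly k over F_q to elements of degree exactly k. Then for each α in the algebraic closure of F_q, the polynomial F(x) − α has exactly one root in the algebraic closure, and that root has the same degree over F_q as α. -/
open Polynomial

theorem stmt_2 (F : Type*) [Field F] [Fintype F]
    (P : Polynomial F) (d : ℕ) (hd : 1 ≤ d) (hdeg : P.natDegree = d)
    (hpres : ∀ α : AlgebraicClosure F,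
      (minpoly F (Polynomial.aeval α P)).natDegree = (minpoly F α).natDegree) :
    ∀ α : AlgebraicClosure F,
      (∃! γ : AlgebraicClosure F, Polynomial.aeval γ P = α) ∧
      (∀ γ : AlgebraicClosure F, Polynomial.aeval γ P = α →
        (minpoly F γ).natDegree = (minpoly F α).natDegree) := by
  classical
  -- existence of a root for every α
  have hex : ∀ α : AlgebraicClosure F, ∃ γ, aeval γ P = α := by
    intro α
    have h1 : (P.map (algebraMap F (AlgebraicClosure F))).natDegree = d := by
      rw [natDegree_map, hdeg]
    have hQdeg : (P.map (algebraMap F (AlgebraicClosure F)) - C α).natDegree = d := by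
      rw [natDegree_sub_C, h1]
    have hQne : (P.map (algebraMap F (AlgebraicClosure F)) - C α) ≠ 0 := by
      intro h; rw [h] at hQdeg; simp at hQdeg; omega
    have hQd : (P.map (algebraMap F (AlgebraicClosure F)) - C α).degree ≠ 0 := by
      rw [degree_eq_natDegree hQne, hQdeg]
      simp only [ne_eq, Nat.cast_eq_zero]
      omega
    obtain ⟨z, hz⟩ := IsAlgClosed.exists_root _ hQd
    refine ⟨z, ?_⟩
    have := hz
    simp only [IsRoot, eval_sub, eval_C, eval_map, sub_eq_zero] at this
    rwa [aeval_def]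
  -- every element of degree k satisfies x ^ (q ^ k) = x
  have hpow : ∀ x : AlgebraicClosure F,
      x ^ Fintype.card F ^ (minpoly F x).natDegree = x := by
    intro x
    have hx : IsIntegral F x := Algebra.IsIntegral.isIntegral x
    set K := IntermediateField.adjoin F ({x} : Set (AlgebraicClosure F)) with hK
    haveI : FiniteDimensional F K := IntermediateField.adjoin.finiteDimensional hx
    haveI : Finite K := Module.finite_of_finite F
    haveI : Fintype K := Fintype.ofFinite K
    have hcard : Fintype.card K = Fintype.card F ^ (minpoly F x).natDegree := by
      rw [Module.card_eq_pow_finrank (K := F) (V := K), IntermediateField.adjoin.finrank hx]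
    have hxK : x ∈ K := IntermediateField.mem_adjoin_simple_self F x
    have := FiniteField.pow_card (⟨x, hxK⟩ : K)
    rw [hcard] at this
    simpa using congrArg Subtype.val this
  intro α
  set k := (minpoly F α).natDegree with hk
  -- the set of elements of degree exactly k is finite
  set T : Set (AlgebraicClosure F) := {x | (minpoly F x).natDegree = k} with hT
  have hTfin : T.Finite := by
    have hsub : T ⊆ {x : AlgebraicClosure F |
        ((X ^ Fintype.card F ^ k - X : (AlgebraicClosure F)[X])).IsRoot x} := by
      intro x hx
      simp only [IsRoot, eval_sub, eval_pow, eval_X, sub_eq_zero, Set.mem_setOf_eq]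
      rw [← hx]; exact hpow x
    refine Set.Finite.subset (Polynomial.finite_setOf_isRoot ?_) hsub
    apply FiniteField.X_pow_card_pow_sub_X_ne_zero
    · have := minpoly.natDegree_pos (Algebra.IsIntegral.isIntegral (R := F) α)
      omega
    · exact Fintype.one_lt_card
  -- the map γ ↦ aeval γ P maps T to T and is surjective on T, hence injective
  have hmaps : Set.MapsTo (fun γ => aeval γ P) T T := by
    intro x hx
    simp only [hT, Set.mem_setOf_eq] at hx ⊢
    rw [hpres x, hx]
  have hsurj : Set.SurjOn (fun γ => aeval γ P) T T := by
    intro y hy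
    obtain ⟨γ, hγ⟩ := hex y
    refine ⟨γ, ?_, hγ⟩
    simp only [hT, Set.mem_setOf_eq] at hy ⊢
    have := hpres γ
    rw [hγ] at this
    rw [← this, hy]
  have hbij : Set.BijOn (fun γ => aeval γ P) T T :=
    (hTfin.surjOn_iff_bijOn_of_mapsTo hmaps).mp hsurj
  have hdegpres : ∀ γ : AlgebraicClosure F, aeval γ P = α →
      (minpoly F γ).natDegree = (minpoly F α).natDegree := by
    intro γ hγ
    have := hpres γ
    rw [hγ] at this
    exact this.symm
  refine ⟨?_, hdegpres⟩
  obtain ⟨γ₀, hγ₀⟩ := hex α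
  have hαT : α ∈ T := by simp [hT, hk]
  refine ⟨γ₀, hγ₀, ?_⟩
  intro γ hγ
  exact hbij.injOn (hdegpres γ hγ) (hdegpres γ₀ hγ₀) (by rw [hγ, hγ₀])
end

section
/- Let F ∈ F_q[x] have degree d ≥ 1 and suppose that for every α in the algebraic closure of F_q, the polynomial F(x) − α has a unique root in the algebraic closure (necessarily with multiplicity d). Then F(x) = a·x^{p^h} + b for some a, b ∈ F_q with a ≠ 0 and some integer h ≥ 0, where p is the characteristic of F_q. -/
open Polynomial

theorem stmt_3 (F : Type*) [Field F] [Fintype F] (p : ℕ) (hp : p = ringChar F)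
    (P : Polynomial F) (d : ℕ) (hd : 1 ≤ d) (hdeg : P.natDegree = d)
    (huniq : ∀ α : AlgebraicClosure F, ∃! γ : AlgebraicClosure F, Polynomial.aeval γ P = α) :
    ∃ (a b : F) (h : ℕ), a ≠ 0 ∧ P = Polynomial.C a * Polynomial.X ^ p ^ h + Polynomial.C b := by
  set K := AlgebraicClosure F
  set φ : F →+* K := (algebraMap F K) with hφdef
  have hφ : Function.Injective φ := φ.injective
  have hP0 : P ≠ 0 := fun h => by simp [h] at hdeg; omega
  set Q : Polynomial K := P.map φ with hQ
  have hQdeg : Q.natDegree = d := by rw [hQ, natDegree_map_eq_of_injective hφ, hdeg]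
  have haeval : ∀ γ : K, aeval γ P = Q.eval γ := by
    intro γ; rw [hQ, eval_map]; rfl
  have hinj : ∀ γ δ : K, Q.eval γ = Q.eval δ → γ = δ := by
    intro γ δ h
    obtain ⟨x, hx, hun⟩ := huniq (Q.eval δ)
    rw [hun γ (by show (aeval γ) P = _; rw [haeval]; exact h),
        hun δ (by show (aeval δ) P = _; rw [haeval])]
  -- step 1 : Q = C c * X ^ d + C (Q.eval 0)
  set R : Polynomial K := Q - C (Q.eval 0) with hR
  have hRdeg : R.natDegree = d := by rw [hR, natDegree_sub_C, hQdeg]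
  have hR0 : R ≠ 0 := fun h => by rw [h] at hRdeg; simp at hRdeg; omega
  have hroots_card : R.roots.card = R.natDegree :=
    (splits_iff_card_roots.mp (IsAlgClosed.splits R))
  have hroots : R.roots = Multiset.replicate d 0 := by
    rw [Multiset.eq_replicate]
    refine ⟨by rw [hroots_card, hRdeg], fun r hr => ?_⟩
    have h1 : R.eval r = 0 := isRoot_of_mem_roots hr
    rw [hR] at h1; simp only [eval_sub, eval_C, sub_eq_zero] at h1
    exact hinj r 0 h1
  have hRform : R = C R.leadingCoeff * X ^ d := by
    have e := C_leadingCoeff_mul_prod_multiset_X_sub_C hroots_card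
    rw [hroots, Multiset.map_replicate, Multiset.prod_replicate] at e
    rw [← e]
    simp
  have hQform : Q = C R.leadingCoeff * X ^ d + C (Q.eval 0) := by
    have h2 : Q - C (Q.eval 0) = C R.leadingCoeff * X ^ d := hR ▸ hRform
    rw [sub_eq_iff_eq_add] at h2
    exact h2
  -- transfer back to F
  have hlc : R.leadingCoeff = φ P.leadingCoeff := by
    have h1 : R.leadingCoeff = Q.leadingCoeff := by
      rw [leadingCoeff, leadingCoeff, hRdeg, hQdeg, hR, coeff_sub, coeff_C,
        if_neg (by omega : ¬ d = 0), sub_zero]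
    rw [h1, hQ, leadingCoeff, natDegree_map_eq_of_injective hφ, coeff_map, leadingCoeff]
  have heval0 : Q.eval 0 = φ (P.eval 0) := by
    rw [hQ, eval_map, eval₂_at_zero, coeff_zero_eq_eval_zero]
  set a : F := P.leadingCoeff with ha
  set b : F := P.eval 0 with hb
  have ha0 : a ≠ 0 := leadingCoeff_ne_zero.mpr hP0
  have hPform : P = C a * X ^ d + C b := by
    apply map_injective φ hφ
    rw [← hQ, hQform, hlc, heval0]
    simp [Polynomial.map_add, Polynomial.map_mul, Polynomial.map_pow]
  -- step 2 : d = p ^ h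
  have hpprime : p.Prime := by
    have : CharP F (ringChar F) := ringChar.charP F
    rw [hp]
    exact CharP.char_is_prime F (ringChar F)
  have hcharK : CharP K p := by
    have : CharP F p := hp ▸ ringChar.charP F
    exact charP_of_injective_ringHom hφ p
  obtain ⟨h, m, hdm, hpm⟩ : ∃ h m : ℕ, p ^ h * m = d ∧ ¬ p ∣ m :=
    ⟨d.factorization p, d / p ^ d.factorization p,
      Nat.ordProj_mul_ordCompl_eq_self d p,
      Nat.not_dvd_ordCompl hpprime (by omega)⟩
  have hm1 : m = 1 := by
    by_contra hm1
    have hm0 : m ≠ 0 := by intro hc; rw [hc, mul_zero] at hdm; omega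
    have hm2 : 2 ≤ m := by omega
    -- X^m - 1 is separable over K, so it has m distinct roots
    have hmK : (m : K) ≠ 0 := by
      rwa [Ne, CharP.cast_eq_zero_iff K p m]
    classical
    have hsep : (X ^ m - C (1 : K)).Separable :=
      separable_X_pow_sub_C (1 : K) hmK one_ne_zero
    set S : Polynomial K := X ^ m - C (1 : K) with hS
    have hS0 : S ≠ 0 := X_pow_sub_C_ne_zero (by omega) 1
    have hSdeg : S.natDegree = m := natDegree_X_pow_sub_C
    have hScard : S.roots.card = m :=
      (splits_iff_card_roots.mp (IsAlgClosed.splits S)).trans hSdeg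
    have hnodup : S.roots.Nodup := nodup_roots hsep
    have hfin : 2 ≤ S.roots.toFinset.card := by
      rw [Multiset.toFinset_card_of_nodup hnodup, hScard]; omega
    obtain ⟨x, hx, y, hy, hxy⟩ := Finset.one_lt_card.mp hfin
    have hroot : ∀ z ∈ S.roots.toFinset, z ^ m = 1 := by
      intro z hz
      have : S.eval z = 0 := isRoot_of_mem_roots (Multiset.mem_toFinset.mp hz)
      rw [hS] at this; simp [sub_eq_zero] at this; exact this
    have hevalform : ∀ γ : K, Q.eval γ = φ a * γ ^ d + φ b := by
      intro γ
      rw [hQ, hPform]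
      simp
    have hxd : x ^ d = 1 := by rw [← hdm, mul_comm, pow_mul, hroot x hx, one_pow]
    have hyd : y ^ d = 1 := by rw [← hdm, mul_comm, pow_mul, hroot y hy, one_pow]
    exact hxy (hinj x y (by rw [hevalform, hevalform, hxd, hyd]))
  refine ⟨a, b, h, ha0, ?_⟩
  rw [hPform, ← hdm, hm1, mul_one]
end

section
/- Let k be a positive integer and F ∈ F_q[x] such that c ↦ F(c) is a permutation of F_{q^k}. Then the map f ↦ F ⋄ f (sending a monic irreducible f of degree k with root α to the minimal polynomial of F(α)) is a permutation of the set I_k of monic irreducible polynomials of degree k over F_q. -/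
/-!
Since `c ↦ P(c)` is injective on `E`, it permutes every (finite) subfield `K` of `E`, so
`P(α) ∈ K` forces `α ∈ K`. Hence `F⟮P(α)⟯ = F⟮α⟯`, and `α`, `P(α)` have minimal polynomials
of the same degree. Every `f ∈ I_k` has a root in `E = F_{q^k}` and is its minimal polynomial,
so `f ↦ P ⋄ f` maps `I_k` onto itself; as `I_k` is finite, it is a bijection.
-/

open Polynomial IntermediateField

theorem Module.finrank_eq_of_card_eq_pow {F V : Type*} [Field F] [Fintype F] [AddCommGroup V]
    [Module F V] [Fintype V] {k : ℕ} (h : Fintype.card V = Fintype.card F ^ k) :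
    Module.finrank F V = k :=
  Nat.pow_right_injective Fintype.one_lt_card (Module.card_eq_pow_finrank.symm.trans h)

theorem Polynomial.exists_aeval_eq_zero_of_natDegree_dvd_finrank {F L : Type*} [Field F]
    [Field L] [Algebra F L] [Finite L] {f : F[X]} (hf : Irreducible f)
    (hdvd : f.natDegree ∣ Module.finrank F L) : ∃ α : L, aeval α f = 0 := by
  have : Fact (Irreducible f) := ⟨hf⟩
  obtain ⟨φ⟩ :=
    FiniteField.nonempty_algHom_of_finrank_dvd (F := F) (K := AdjoinRoot f) (L := L)
    (by rwa [(AdjoinRoot.powerBasis hf.ne_zero).finrank, AdjoinRoot.powerBasis_dim])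
  exact ⟨φ (AdjoinRoot.root f), by rw [aeval_algHom_apply, AdjoinRoot.aeval_eq,
    AdjoinRoot.mk_self, map_zero]⟩

section PermutationPolynomial

variable {F E : Type*} [Field F] [Field E] [Algebra F E] {P : F[X]}

theorem IntermediateField.mem_of_aeval_mem (hP : Function.Injective fun c : E => aeval c P)
    (K : IntermediateField F E) [Finite K] {x : E} (hx : aeval x P ∈ K) : x ∈ K := by
  have hPK : Function.Injective fun y : K => aeval y P := fun y z h =>
    Subtype.ext (hP (by simpa only [aeval_coe] using congrArg Subtype.val h))
  obtain ⟨y, hy⟩ := Finite.surjective_of_injective hPK ⟨_, hx⟩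
  have hyx : (y : E) = x := hP (by simpa only [aeval_coe] using congrArg Subtype.val hy)
  exact hyx ▸ y.2

theorem IntermediateField.adjoin_simple_aeval_eq_of_injective [Finite E]
    (hP : Function.Injective fun c : E => aeval c P) (α : E) : F⟮aeval α P⟯ = F⟮α⟯ := by
  refine le_antisymm (adjoin_simple_le_iff.mpr ?_) (adjoin_simple_le_iff.mpr ?_)
  · rw [aeval_coe _ ⟨α, mem_adjoin_simple_self F α⟩]
    exact SetLike.coe_mem _
  · exact mem_of_aeval_mem hP _ (mem_adjoin_simple_self F _)

theorem natDegree_minpoly_aeval_of_injective [Finite E]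
    (hP : Function.Injective fun c : E => aeval c P) (α : E) : (minpoly F (aeval α P)).natDegree = (minpoly F α).natDegree := by
  rw [← adjoin.finrank (Algebra.IsIntegral.isIntegral _),
    ← adjoin.finrank (Algebra.IsIntegral.isIntegral _), adjoin_simple_aeval_eq_of_injective hP]

end PermutationPolynomial

theorem stmt_5_general (F : Type*) [Field F] [Fintype F]
    (E : Type*) [Field E] [Algebra F E] [Fintype E]
    (k : ℕ) (hE : Fintype.card E = Fintype.card F ^ k)
    (P : Polynomial F)
    (hperm : Function.Bijective (fun c : E => Polynomial.aeval c P))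
    (D : Polynomial F → Polynomial F)
    (hD : ∀ f : Polynomial F, f.Monic → Irreducible f → f.natDegree = k →
      ∀ α : E, Polynomial.aeval α f = 0 → D f = minpoly F (Polynomial.aeval α P)) :
    Set.BijOn D {f : Polynomial F | f.Monic ∧ Irreducible f ∧ f.natDegree = k}
      {f : Polynomial F | f.Monic ∧ Irreducible f ∧ f.natDegree = k} := by
  set I := {f : F[X] | f.Monic ∧ Irreducible f ∧ f.natDegree = k}
  have hroot : ∀ f ∈ I, ∃ α : E, f = minpoly F α := by
    rintro f ⟨hm, hirr, hdeg⟩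
    obtain ⟨α, hα⟩ := exists_aeval_eq_zero_of_natDegree_dvd_finrank (L := E) hirr
      (by rw [hdeg, Module.finrank_eq_of_card_eq_pow hE])
    exact ⟨α, minpoly.eq_of_irreducible_of_monic hirr hα hm⟩
  have hminpoly_mem : ∀ α : E, (minpoly F α).natDegree = k → minpoly F α ∈ I := fun α h =>
    ⟨minpoly.monic (Algebra.IsIntegral.isIntegral α),
      minpoly.irreducible (Algebra.IsIntegral.isIntegral α), h⟩
  have hD_minpoly : ∀ α : E, minpoly F α ∈ I → D (minpoly F α) = minpoly F (aeval α P) :=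
    fun α ⟨hm, hirr, hdeg⟩ => hD _ hm hirr hdeg α (minpoly.aeval F α)
  have hmaps : Set.MapsTo D I I := by
    intro f hf
    obtain ⟨α, rfl⟩ := hroot f hf
    rw [hD_minpoly α hf]
    exact hminpoly_mem _ ((natDegree_minpoly_aeval_of_injective hperm.1 α).trans hf.2.2)
  have hsurj : Set.SurjOn D I I := by
    intro g hg
    obtain ⟨γ, rfl⟩ := hroot g hg
    obtain ⟨α, rfl⟩ := hperm.2 γ
    have hα : minpoly F α ∈ I :=
      hminpoly_mem α ((natDegree_minpoly_aeval_of_injective hperm.1 α).symm.trans hg.2.2)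
    exact ⟨_, hα, hD_minpoly α hα⟩
  have hfinite : I.Finite := (Set.finite_range (minpoly F : E → F[X])).subset
    fun f hf => (hroot f hf).imp fun _ h => h.symm
  exact (hfinite.surjOn_iff_bijOn_of_mapsTo hmaps).mp hsurj

/-- if `P ∈ F_q[x]` permutes `F_{q^k}`, then the induced map
`f ↦ P ⋄ f = minpoly (P(α))` (for `α` a root of `f`) is a permutation of the set
of monic irreducible polynomials of degree `k` over `F_q`. -/
theorem stmt_5 (F : Type*) [Field F] [Fintype F]
    (E : Type*) [Field E] [Algebra F E] [Fintype E]
    (k : ℕ) (hk : 0 < k) (hE : Fintype.card E = Fintype.card F ^ k)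
    (P : Polynomial F)
    (hperm : Function.Bijective (fun c : E => Polynomial.aeval c P))
    (D : Polynomial F → Polynomial F)
    (hD : ∀ f : Polynomial F, f.Monic → Irreducible f → f.natDegree = k →
      ∀ α : E, Polynomial.aeval α f = 0 → D f = minpoly F (Polynomial.aeval α P)) :
    Set.BijOn D {f : Polynomial F | f.Monic ∧ Irreducible f ∧ f.natDegree = k}
      {f : Polynomial F | f.Monic ∧ Irreducible f ∧ f.natDegree = k} :=
  stmt_5_general F E k hE P hperm D hD
end

section
/- Let G_k be the set of polynomials P ∈ F_q[x] of degree less than q^k whose evaluation map is a permutation of F_{q^k}. Then G_k is a group under composition followed by reduction modulo x^{q^k} − x; in particular, the compositional inverse (as a permutation of F_{q^k}) of any P ∈ G_k is represented by a polynomial with coefficients in F_q. -/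
open Polynomial

/-- `G_k`, the set of polynomials over `F_q` of degree `< q^k` permuting
`F_{q^k}`, is a group under composition modulo `x^{q^k} - x`: it contains the identity `X`,
is closed under reduced composition (which represents the composite permutation), and every
member has a compositional inverse in `G_k`. -/
theorem stmt_6 (F : Type*) [Field F] [Fintype F]
    (E : Type*) [Field E] [Algebra F E] [Fintype E]
    (k : ℕ) (hk : 0 < k) (hE : Fintype.card E = Fintype.card F ^ k)
    (Gk : Set (Polynomial F))
    (hGk : Gk = {P : Polynomial F | P.natDegree < Fintype.card F ^ k ∧
      Function.Bijective (fun c : E => Polynomial.aeval c P)}) :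
    (Polynomial.X ∈ Gk) ∧
    (∀ P ∈ Gk, ∀ Q ∈ Gk,
      (P.comp Q) % (Polynomial.X ^ Fintype.card F ^ k - Polynomial.X) ∈ Gk ∧
      (∀ c : E, Polynomial.aeval c
          ((P.comp Q) % (Polynomial.X ^ Fintype.card F ^ k - Polynomial.X)) =
        Polynomial.aeval (Polynomial.aeval c Q) P)) ∧
    (∀ P ∈ Gk, ∃ Q ∈ Gk,
      (∀ c : E, Polynomial.aeval (Polynomial.aeval c P) Q = c) ∧
      (∀ c : E, Polynomial.aeval (Polynomial.aeval c Q) P = c)) := by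
  set n := Fintype.card F ^ k with hn
  have hn2 : 2 ≤ n := by
    calc 2 ≤ Fintype.card F := Fintype.one_lt_card
    _ ≤ n := by
      conv_lhs => rw [← pow_one (Fintype.card F)]
      exact Nat.pow_le_pow_right (Nat.le_of_lt Fintype.one_lt_card) hk
  set g : F[X] := X ^ n - X with hgdef
  have hmonic : g.Monic := by
    apply monic_X_pow_sub
    rw [degree_X]
    exact_mod_cast Nat.lt_of_lt_of_le one_lt_two hn2
  have hg0 : ∀ c : E, aeval c g = 0 := by
    intro c
    simp only [hgdef, map_sub, map_pow, aeval_X, ← hE]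
    rw [FiniteField.pow_card, sub_self]
  -- aeval of mod
  have haemod : ∀ (f : F[X]) (c : E), aeval c (f % g) = aeval c f := by
    intro f c
    conv_rhs => rw [← EuclideanDomain.div_add_mod f g]
    rw [map_add, map_mul, hg0, zero_mul, zero_add]
  have hdegmod : ∀ f : F[X], (f % g).natDegree < n := by
    intro f
    rcases eq_or_ne (f % g) 0 with h | h
    · rw [h, natDegree_zero]; omega
    · rw [natDegree_lt_iff_degree_lt h]
      have := degree_modByMonic_lt f hmonic
      rw [modByMonic_eq_mod _ hmonic] at this
      refine this.trans_le ?_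
      rw [hgdef]
      have : (X:F[X]).degree < (X ^ n : F[X]).degree := by
        rw [degree_X, degree_X_pow]; exact_mod_cast Nat.lt_of_lt_of_le one_lt_two hn2
      rw [degree_sub_eq_left_of_degree_lt this, degree_X_pow]
  have hXmem : (X : F[X]) ∈ Gk := by
    rw [hGk]
    refine ⟨by rw [natDegree_X]; omega, ?_⟩
    simp only [aeval_X]
    exact Function.bijective_id
  refine ⟨hXmem, ?_, ?_⟩
  · intro P hP Q hQ
    rw [hGk] at hP hQ
    have heval : ∀ c : E, aeval c ((P.comp Q) % g) = aeval (aeval c Q) P := by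
      intro c; rw [haemod, aeval_comp]
    refine ⟨?_, heval⟩
    rw [hGk]
    refine ⟨hdegmod _, ?_⟩
    have : (fun c : E => aeval c ((P.comp Q) % g)) =
        (fun c : E => aeval c P) ∘ (fun c : E => aeval c Q) := by
      funext c; exact heval c
    rw [this]
    exact hP.2.comp hQ.2
  · intro P hP
    have hPmem := hP
    rw [hGk] at hPmem
    set f : E → E := fun c => aeval c P with hf
    have hfbij : Function.Bijective f := hPmem.2
    set σ : Equiv.Perm E := Equiv.ofBijective f hfbij with hσ
    -- iterated compositions
    have key : ∀ j : ℕ, ∃ Q ∈ Gk, ∀ c : E, aeval c Q = f^[j] c := by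
      intro j
      induction j with
      | zero => exact ⟨X, hXmem, fun c => by simp⟩
      | succ j ih =>
        obtain ⟨Q, hQ, hQe⟩ := ih
        refine ⟨(P.comp Q) % g, ?_, ?_⟩
        · rw [hGk]
          refine ⟨hdegmod _, ?_⟩
          have : (fun c : E => aeval c ((P.comp Q) % g)) =
              (fun c : E => aeval c P) ∘ (fun c : E => aeval c Q) := by
            funext c; rw [haemod, aeval_comp]; rfl
          rw [this]
          have hQ' := hQ
          rw [hGk] at hQ'
          exact hfbij.comp hQ'.2
        · intro c
          rw [haemod, aeval_comp, hQe, Function.iterate_succ_apply']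
    set m := orderOf σ with hm
    have hmpos : 0 < m := orderOf_pos σ
    have hiter : ∀ (j : ℕ) (c : E), f^[j] c = (σ ^ j) c := by
      intro j
      induction j with
      | zero => intro c; simp
      | succ j ih =>
        intro c
        rw [Function.iterate_succ_apply', ih, pow_succ']
        rfl
    have hid : ∀ c : E, f^[m] c = c := by
      intro c
      rw [hiter, pow_orderOf_eq_one]
      rfl
    obtain ⟨Q, hQ, hQe⟩ := key (m - 1)
    refine ⟨Q, hQ, ?_, ?_⟩
    · intro c
      have : aeval (aeval c P) Q = f^[m-1] (f c) := hQe _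
      rw [this, ← Function.iterate_succ_apply]
      have h2 : (m-1).succ = m := by omega
      rw [h2]; exact hid c
    · intro c
      have h1 : aeval c Q = f^[m-1] c := hQe c
      show f (aeval c Q) = c
      rw [h1, ← Function.iterate_succ_apply' f (m-1) c]
      have h2 : (m-1).succ = m := by omega
      rw [h2]; exact hid c
end

section
/- For every permutation σ of the set I_k of monic irreducible polynomials of degree k over F_q, there exists a polynomial P ∈ F_q[x] of degree less than q^k permuting F_{q^k} such that for every f ∈ I_k with root α, σ(f) is the minimal polynomial of P(α) over F_q. -/
/-!
The Galois group of `E / F` acts freely on the primitive elements of `E`, and its orbits are the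
root sets of the irreducible polynomials of degree `k`. Choosing one root of each such polynomial,
`σ` lifts to an injective equivariant map `g : E → E` (the identity off the primitive elements).
The Lagrange interpolant of `g` over `E` has degree `< q ^ k`, and since `g` commutes with the
Galois group, every Galois conjugate of the interpolant interpolates `g` as well; so its
coefficients are fixed by the Galois group and lie in `F`.
-/

open Polynomial IntermediateField

theorem MulAction.exists_injective_equivariant_lift {G α β : Type*} [Group G] [MulAction G α]
    {S : Set α} (hS : ∀ (g : G) (x : α), g • x ∈ S ↔ x ∈ S)
    (hfree : ∀ x ∈ S, ∀ g h : G, g • x = h • x → g = h)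
    {π : α → β} (horbit : ∀ x ∈ S, ∀ y ∈ S, π x = π y ↔ ∃ g : G, g • x = y)
    {σ : β → β} (hmaps : Set.MapsTo σ (π '' S) (π '' S)) (hinj : Set.InjOn σ (π '' S)) :
    ∃ φ : α → α, Function.Injective φ ∧ (∀ (g : G) (x : α), φ (g • x) = g • φ x) ∧
      ∀ x ∈ S, π (φ x) = σ (π x) := by
  classical
  cases isEmpty_or_nonempty α
  · exact ⟨id, Function.injective_id, fun _ x => isEmptyElim x, fun x => isEmptyElim x⟩
  have hπ_smul : ∀ x ∈ S, ∀ g : G, π (g • x) = π x := fun x hx g =>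
    ((horbit x hx _ ((hS g x).2 hx)).2 ⟨g, rfl⟩).symm
  choose! r hrS hrπ using fun (y : β) (hy : y ∈ π '' S) => hy
  have : ∀ x ∈ S, ∃ g : G, g • r (π x) = x := fun x hx =>
    (horbit _ (hrS _ ⟨x, hx, rfl⟩) x hx).1 (hrπ _ ⟨x, hx, rfl⟩)
  choose! t ht using this
  let φ : α → α := fun x => if x ∈ S then t x • r (σ (π x)) else x
  have hφS : ∀ x ∈ S, φ x ∈ S ∧ π (φ x) = σ (π x) := by
    intro x hx
    have hσx := hmaps ⟨x, hx, rfl⟩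
    simp only [φ, if_pos hx]
    exact ⟨(hS _ _).2 (hrS _ hσx), by rw [hπ_smul _ (hrS _ hσx), hrπ _ hσx]⟩
  refine ⟨φ, fun x y hxy => ?_, fun g x => ?_, fun x hx => (hφS x hx).2⟩
  · by_cases hx : x ∈ S <;> by_cases hy : y ∈ S
    · have hπ : π x = π y := hinj ⟨x, hx, rfl⟩ ⟨y, hy, rfl⟩ <| by
        rw [← (hφS x hx).2, ← (hφS y hy).2, hxy]
      have hσx := hmaps ⟨x, hx, rfl⟩
      simp only [φ, if_pos hx, if_pos hy, hπ] at hxy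
      rw [← ht x hx, ← ht y hy, hπ, hfree _ (hrS _ (hπ ▸ hσx)) _ _ hxy]
    · simp only [φ, if_neg hy] at hxy
      exact absurd (hxy ▸ (hφS x hx).1) hy
    · simp only [φ, if_neg hx] at hxy
      exact absurd (hxy ▸ (hφS y hy).1) hx
    · simpa only [φ, if_neg hx, if_neg hy] using hxy
  · by_cases hx : x ∈ S
    · have hgx : g • x ∈ S := (hS g x).2 hx
      have htg : t (g • x) = g * t x := hfree _ (hrS _ ⟨x, hx, rfl⟩) _ _ <| by
        rw [mul_smul, ht x hx, ← hπ_smul x hx g, ht _ hgx]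
      simp only [φ, if_pos hx, if_pos hgx, htg, hπ_smul x hx, mul_smul]
    · simp only [φ, if_neg hx, if_neg (mt (hS g x).1 hx)]

section FiniteExtension

variable {F E : Type*} [Field F] [Field E] [Algebra F E] [FiniteDimensional F E]

theorem AlgEquiv.eq_of_apply_eq_of_adjoin_simple_eq_top {x : E} (hx : F⟮x⟯ = ⊤)
    {τ₁ τ₂ : Gal(E/F)} (h : τ₁ x = τ₂ x) : τ₁ = τ₂ :=
  AlgEquiv.coe_toAlgHom_injective <| AlgHom.ext_of_adjoin_eq_top
    ((adjoin_simple_eq_top_iff_of_isAlgebraic (IsAlgebraic.of_finite F x)).1 hx)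
    (by rintro _ rfl; exact h)

theorem IntermediateField.adjoin_simple_algEquiv_apply_eq_top_iff (τ : Gal(E/F)) (x : E) :
    F⟮τ x⟯ = ⊤ ↔ F⟮x⟯ = ⊤ := by
  simp only [Field.primitive_element_iff_minpoly_natDegree_eq, minpoly.algEquiv_eq]

theorem Normal.exists_injective_commute_algEquiv_minpoly_eq [Normal F E] {σ : F[X] → F[X]}
    (hmaps : Set.MapsTo σ (minpoly F '' {x : E | F⟮x⟯ = ⊤}) (minpoly F '' {x : E | F⟮x⟯ = ⊤}))
    (hinj : Set.InjOn σ (minpoly F '' {x : E | F⟮x⟯ = ⊤})) :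
    ∃ g : E → E, Function.Injective g ∧ (∀ (τ : Gal(E/F)) (x : E), g (τ x) = τ (g x)) ∧
      ∀ x : E, F⟮x⟯ = ⊤ → minpoly F (g x) = σ (minpoly F x) :=
  MulAction.exists_injective_equivariant_lift (G := Gal(E/F))
    adjoin_simple_algEquiv_apply_eq_top_iff
    (fun _ hx _ _ h => AlgEquiv.eq_of_apply_eq_of_adjoin_simple_eq_top hx h)
    (fun x _ y _ => eq_comm.trans (Normal.minpoly_eq_iff_mem_orbit (F := F) (x := y) (y := x)))
    hmaps hinj

end FiniteExtension

namespace FiniteField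

variable {F E : Type*} [Field F] [Field E] [Algebra F E]

theorem exists_aeval_eq_zero_of_natDegree_eq_finrank [Finite E] {f : F[X]} (hf : Irreducible f)
    (hdeg : f.natDegree = Module.finrank F E) : ∃ α : E, aeval α f = 0 := by
  have : Fact (Irreducible f) := ⟨hf⟩
  have hrank : Module.finrank F (AdjoinRoot f) = f.natDegree := by
    rw [(AdjoinRoot.powerBasis hf.ne_zero).finrank, AdjoinRoot.powerBasis_dim]
  obtain ⟨φ⟩ := nonempty_algHom_of_finrank_dvd (K := AdjoinRoot f) (L := E) (hrank.trans hdeg).dvd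
  exact ⟨φ (AdjoinRoot.root f), AdjoinRoot.aeval_algHom_eq_zero f φ⟩

theorem setOf_irreducible_natDegree_eq_finrank [Finite E] :
    {f : F[X] | f.Monic ∧ Irreducible f ∧ f.natDegree = Module.finrank F E} =
      minpoly F '' {x : E | F⟮x⟯ = ⊤} := by
  have := Finite.of_injective _ (algebraMap F E).injective
  have := Module.finite_of_finite F (M := E)
  ext f
  constructor
  · rintro ⟨hmonic, hirr, hdeg⟩
    obtain ⟨α, hα⟩ := exists_aeval_eq_zero_of_natDegree_eq_finrank hirr hdeg
    have hmin := (minpoly.eq_of_irreducible_of_monic hirr hα hmonic).symm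
    exact ⟨α, (Field.primitive_element_iff_minpoly_natDegree_eq F α).2 (hmin ▸ hdeg), hmin⟩
  · rintro ⟨x, hx, rfl⟩
    have hint := IsIntegral.of_finite F x
    exact ⟨minpoly.monic hint, minpoly.irreducible hint,
      (Field.primitive_element_iff_minpoly_natDegree_eq F x).1 hx⟩

theorem exists_polynomial_aeval_eq_of_commute_algEquiv [Fintype E] (g : E → E)
    (hg : ∀ (τ : Gal(E/F)) (x : E), g (τ x) = τ (g x)) :
    ∃ P : F[X], P.natDegree < Fintype.card E ∧ ∀ x : E, aeval x P = g x := by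
  classical
  have := Finite.of_injective _ (algebraMap F E).injective
  have := Module.finite_of_finite F (M := E)
  have hid : Set.InjOn id ((Finset.univ : Finset E) : Set E) := Function.injective_id.injOn
  set Q : E[X] := Lagrange.interpolate Finset.univ id g
  have hQ_eval (x : E) : Q.eval x = g x :=
    Lagrange.eval_interpolate_at_node g hid (Finset.mem_univ x)
  have hQ_deg : Q.degree < Fintype.card E := Lagrange.degree_interpolate_lt g hid
  have hQ_fixed (τ : Gal(E/F)) : Q.map (τ : E →+* E) = Q := by
    refine Lagrange.eq_interpolate_of_eval_eq g hid (by rwa [degree_map]) fun x _ => ?_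
    obtain ⟨y, rfl⟩ := τ.surjective x
    rw [id, eval_map, ← RingHom.coe_coe τ, eval₂_at_apply, hQ_eval]
    exact (hg τ y).symm
  have hQ_lifts : Q ∈ lifts (algebraMap F E) := (lifts_iff_coeff_lifts Q).2 fun n =>
    (IsGalois.mem_range_algebraMap_iff_fixed _).2 fun τ => by
      conv_rhs => rw [← hQ_fixed τ, coeff_map]
      rfl
  obtain ⟨P, hPQ⟩ := (mem_lifts Q).1 hQ_lifts
  refine ⟨P, ?_, fun x => ?_⟩
  · rw [← natDegree_map (algebraMap F E), hPQ]
    rcases eq_or_ne Q 0 with hQ | hQ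
    · rw [hQ, natDegree_zero]
      exact Fintype.card_pos
    · exact (natDegree_lt_iff_degree_lt hQ).2 hQ_deg
  · rw [← eval_map_algebraMap, hPQ, hQ_eval]

end FiniteField

theorem stmt_7_general (F : Type*) [Field F] [Fintype F]
    (E : Type*) [Field E] [Algebra F E] [Fintype E]
    (k : ℕ) (hE : Fintype.card E = Fintype.card F ^ k)
    (σ : Polynomial F → Polynomial F)
    (hσ : Set.BijOn σ {f : Polynomial F | f.Monic ∧ Irreducible f ∧ f.natDegree = k}
      {f : Polynomial F | f.Monic ∧ Irreducible f ∧ f.natDegree = k}) :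
    ∃ P : Polynomial F, P.natDegree < Fintype.card F ^ k ∧
      Function.Bijective (fun c : E => Polynomial.aeval c P) ∧
      ∀ f : Polynomial F, f.Monic → Irreducible f → f.natDegree = k →
        ∀ α : E, Polynomial.aeval α f = 0 → σ f = minpoly F (Polynomial.aeval α P) := by
  have hrank : Module.finrank F E = k := Nat.pow_right_injective (Fintype.one_lt_card (α := F))
    (Module.card_eq_pow_finrank.symm.trans hE)
  rw [← hrank, FiniteField.setOf_irreducible_natDegree_eq_finrank] at hσ
  obtain ⟨g, hg_inj, hg_comm, hg_minpoly⟩ :=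
    Normal.exists_injective_commute_algEquiv_minpoly_eq hσ.mapsTo hσ.injOn
  obtain ⟨P, hP_deg, hP⟩ := FiniteField.exists_polynomial_aeval_eq_of_commute_algEquiv g hg_comm
  have hPg : (fun c : E => aeval c P) = g := funext hP
  refine ⟨P, hE ▸ hP_deg, hPg ▸ Finite.injective_iff_bijective.mp hg_inj,
    fun f hmonic hirr hdeg α hα => ?_⟩
  have hmin : minpoly F α = f := (minpoly.eq_of_irreducible_of_monic hirr hα hmonic).symm
  have hprim : F⟮α⟯ = ⊤ :=
    (Field.primitive_element_iff_minpoly_natDegree_eq F α).2 (by rw [hmin, hdeg, hrank])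
  rw [hP, hg_minpoly α hprim, hmin]

/-- every permutation `σ` of the set of monic irreducible polynomials of
degree `k` over `F_q` is induced by some permutation polynomial `P` of `F_{q^k}` with
coefficients in `F_q` and degree `< q^k`. -/
theorem stmt_7 (F : Type*) [Field F] [Fintype F]
    (E : Type*) [Field E] [Algebra F E] [Fintype E]
    (k : ℕ) (hk : 0 < k) (hE : Fintype.card E = Fintype.card F ^ k)
    (σ : Polynomial F → Polynomial F)
    (hσ : Set.BijOn σ {f : Polynomial F | f.Monic ∧ Irreducible f ∧ f.natDegree = k}
      {f : Polynomial F | f.Monic ∧ Irreducible f ∧ f.natDegree = k}) :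
    ∃ P : Polynomial F, P.natDegree < Fintype.card F ^ k ∧
      Function.Bijective (fun c : E => Polynomial.aeval c P) ∧
      ∀ f : Polynomial F, f.Monic → Irreducible f → f.natDegree = k →
        ∀ α : E, Polynomial.aeval α f = 0 → σ f = minpoly F (Polynomial.aeval α P) :=
  stmt_7_general F E k hE σ hσ
end

section
/- Let P ∈ F_q[x] permute F_{q^k} and Q ∈ F_q[x] represent its compositional inverse on F_{q^k}. For any monic irreducible f of degree k over F_q, every irreducible factor of f(Q(x)) over F_q has degree divisible by k, and gcd(f(Q(x)), x^{q^k} − x) equals the minimal polynomial over F_q of P(α), where α is any root of f. -/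
/-!
Since `Q ∘ P = id` on the finite field `E`, also `P ∘ Q = id` there, so every root `c ∈ E` of
`f(Q(x))` is `P(β)` for the root `β = Q(c)` of `f`. As `β` is a Galois conjugate of `α`, `c` is
a Galois conjugate of `P(α)`. Hence every irreducible factor of the gcd of `f(Q(x))` with the
squarefree polynomial `x^{q^k} - x`, which splits over `E`, is the minimal polynomial of `P(α)`,
and squarefreeness leaves room for only one such factor.
For the degree statement: if `r` is an irreducible factor of `f(Q(x))` with root `β`, then `Q(β)`
is a root of `f`, so `F(β)` contains a subfield of degree `k` over `F`.
-/

open Polynomial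

attribute [local instance] Classical.propDecidable

theorem associated_of_squarefree_of_dvd_of_forall_dvd {α : Type*} [CommMonoidWithZero α]
    [IsCancelMulZero α] [Nontrivial α] [WfDvdMonoid α] {m g : α} (hg : Squarefree g)
    (hm : Irreducible m) (hmg : m ∣ g) (h : ∀ r, Irreducible r → r ∣ g → m ∣ r) :
    Associated m g := by
  obtain ⟨e, rfl⟩ := hmg
  refine associated_mul_unit_right m e ?_
  by_contra he
  obtain ⟨r, hr, hre⟩ :=
    WfDvdMonoid.exists_irreducible_factor he (right_ne_zero_of_mul hg.ne_zero)
  have hmr : m ∣ r := h r hr (dvd_mul_of_dvd_right hre m)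
  exact hm.not_isUnit (hg m (mul_dvd_mul_left m (hmr.trans hre)))

theorem Polynomial.C_leadingCoeff_inv_mul_eq_of_associated {K : Type*} [Field K] {m g : K[X]}
    (hm : m.Monic) (hmg : Associated m g) : C g.leadingCoeff⁻¹ * g = m := by
  have hg : g ≠ 0 := hmg.ne_zero_iff.mp hm.ne_zero
  refine eq_of_monic_of_associated ?_ hm ?_
  · rw [mul_comm]
    exact monic_mul_leadingCoeff_inv hg
  · have hu : IsUnit (C g.leadingCoeff⁻¹) :=
      isUnit_C.mpr (inv_ne_zero (leadingCoeff_ne_zero.mpr hg)).isUnit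
    exact (associated_unit_mul_left g _ hu).trans hmg.symm

section

variable {F E : Type*} [Field F] [Field E] [Algebra F E]

theorem Polynomial.natDegree_dvd_natDegree_of_dvd_comp {f r Q : F[X]} (hf : Irreducible f)
    (hr : Irreducible r) (hrf : r ∣ f.comp Q) : f.natDegree ∣ r.natDegree := by
  have : Fact (Irreducible r) := ⟨hr⟩
  let pb := AdjoinRoot.powerBasis hr.ne_zero
  have : FiniteDimensional F (AdjoinRoot r) := pb.finite
  have hroot : aeval (aeval (AdjoinRoot.root r) Q) f = 0 := by
    rwa [← aeval_comp, AdjoinRoot.aeval_eq, AdjoinRoot.mk_eq_zero]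
  rw [minpoly.Irreducible.eq_minpoly hf hroot,
    natDegree_C_mul (leadingCoeff_ne_zero.mpr hf.ne_zero),
    ← AdjoinRoot.powerBasis_dim hr.ne_zero, ← pb.finrank]
  exact minpoly.degree_dvd (Algebra.IsIntegral.isIntegral _)

theorem minpoly_aeval_eq_of_aeval_minpoly_eq_zero [Normal F E] {a b : E}
    (hb : aeval b (minpoly F a) = 0) (P : F[X]) :
    minpoly F (aeval b P) = minpoly F (aeval a P) := by
  obtain ⟨σ, hσ⟩ := minpoly.exists_algEquiv_of_root (Algebra.IsAlgebraic.isAlgebraic a) hb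
  rw [← hσ, ← AlgEquiv.coe_toAlgHom, aeval_algHom_apply, AlgEquiv.coe_toAlgHom,
    minpoly.algEquiv_eq]

theorem minpoly_eq_of_aeval_comp_eq_zero [Normal F E] {f P Q : F[X]}
    (hPQ : ∀ c : E, aeval (aeval c Q) P = c) (hf : Irreducible f) {α : E}
    (hα : aeval α f = 0) {c : E} (hc : aeval c (f.comp Q) = 0) :
    minpoly F c = minpoly F (aeval α P) := by
  have hQc : aeval (aeval c Q) (minpoly F α) = 0 := by
    rw [← minpoly.eq_of_irreducible hf hα, map_mul, ← aeval_comp, hc, zero_mul]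
  rw [← minpoly_aeval_eq_of_aeval_minpoly_eq_zero hQc, hPQ]

variable (F E) [Fintype E]

theorem separable_X_pow_card_sub_X : (X ^ Fintype.card E - X : F[X]).Separable := by
  obtain ⟨p, hp⟩ := CharP.exists F
  have : CharP E p := charP_of_injective_algebraMap' F p
  obtain ⟨n, -, hn⟩ := FiniteField.card E p
  exact galois_poly_separable p _ (hn ▸ dvd_pow_self p n.ne_zero)

theorem exists_aeval_eq_zero_of_dvd_X_pow_card_sub_X {r : F[X]} (hr : 0 < r.degree)
    (hrT : r ∣ X ^ Fintype.card E - X) : ∃ c : E, aeval c r = 0 := by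
  have hsplit := (FiniteField.isSplittingField_sub E F).splits.of_dvd
    (map_ne_zero (separable_X_pow_card_sub_X F E).ne_zero) (map_dvd _ hrT)
  obtain ⟨c, hc⟩ := hsplit.exists_eval_eq_zero (by rw [degree_map]; exact hr.ne')
  exact ⟨c, by rwa [eval_map_algebraMap] at hc⟩

variable {F E}

theorem minpoly_aeval_dvd_of_dvd_comp_of_dvd_X_pow_card_sub_X {f P Q r : F[X]}
    (hPQ : ∀ c : E, aeval (aeval c Q) P = c) (hf : Irreducible f) {α : E}
    (hα : aeval α f = 0) (hr : Irreducible r) (hrQ : r ∣ f.comp Q)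
    (hrT : r ∣ X ^ Fintype.card E - X) : minpoly F (aeval α P) ∣ r := by
  obtain ⟨c, hc⟩ := exists_aeval_eq_zero_of_dvd_X_pow_card_sub_X F E hr.degree_pos hrT
  rw [← minpoly_eq_of_aeval_comp_eq_zero hPQ hf hα (aeval_eq_zero_of_dvd_aeval_eq_zero hrQ hc)]
  exact minpoly.dvd F c hc

end

theorem stmt_8_general (F : Type*) [Field F] [Fintype F]
    (E : Type*) [Field E] [Algebra F E] [Fintype E]
    (k : ℕ) (hE : Fintype.card E = Fintype.card F ^ k)
    (P Q : Polynomial F)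
    (hQ : ∀ c : E, Polynomial.aeval (Polynomial.aeval c P) Q = c)
    (f : Polynomial F) (hirr : Irreducible f) (hdeg : f.natDegree = k)
    (α : E) (hroot : Polynomial.aeval α f = 0)
    (g : Polynomial F)
    (hg : g = EuclideanDomain.gcd (f.comp Q)
      (Polynomial.X ^ Fintype.card F ^ k - Polynomial.X)) :
    (∀ r : Polynomial F, Irreducible r → r ∣ f.comp Q → k ∣ r.natDegree) ∧
    Polynomial.C g.leadingCoeff⁻¹ * g = minpoly F (Polynomial.aeval α P) := by
  refine ⟨fun r hr hrQ => hdeg ▸ natDegree_dvd_natDegree_of_dvd_comp hirr hr hrQ, ?_⟩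
  rw [← hE] at hg
  have hPQ : ∀ c : E, aeval (aeval c Q) P = c :=
    Function.LeftInverse.rightInverse_of_card_le (f := fun c : E => aeval c Q) hQ le_rfl
  have hy : IsIntegral F (aeval α P) := Algebra.IsIntegral.isIntegral _
  have hgQ : g ∣ f.comp Q := hg ▸ EuclideanDomain.gcd_dvd_left _ _
  have hgT : g ∣ X ^ Fintype.card E - X := hg ▸ EuclideanDomain.gcd_dvd_right _ _
  have hmg : minpoly F (aeval α P) ∣ g := hg ▸ EuclideanDomain.dvd_gcd
    (minpoly.dvd F _ (by rw [aeval_comp, hQ, hroot]))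
    (minpoly.dvd F _ (by rw [map_sub, map_pow, aeval_X, FiniteField.pow_card, sub_self]))
  refine C_leadingCoeff_inv_mul_eq_of_associated (minpoly.monic hy) ?_
  exact associated_of_squarefree_of_dvd_of_forall_dvd
    ((separable_X_pow_card_sub_X F E).squarefree.squarefree_of_dvd hgT)
    (minpoly.irreducible hy) hmg fun r hr hrg =>
      minpoly_aeval_dvd_of_dvd_comp_of_dvd_X_pow_card_sub_X hPQ hirr hroot hr
        (hrg.trans hgQ) (hrg.trans hgT)

/-- every irreducible factor of `f(Q(x))` has degree divisible by `k`, and the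
monic gcd of `f(Q(x))` and `x^{q^k} - x` is the minimal polynomial of `P(α)`. -/
theorem stmt_8 (F : Type*) [Field F] [Fintype F]
    (E : Type*) [Field E] [Algebra F E] [Fintype E]
    (k : ℕ) (hk : 0 < k) (hE : Fintype.card E = Fintype.card F ^ k)
    (P Q : Polynomial F)
    (hperm : Function.Bijective (fun c : E => Polynomial.aeval c P))
    (hQ : ∀ c : E, Polynomial.aeval (Polynomial.aeval c P) Q = c)
    (f : Polynomial F) (hmonic : f.Monic) (hirr : Irreducible f) (hdeg : f.natDegree = k)
    (α : E) (hroot : Polynomial.aeval α f = 0)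
    (g : Polynomial F)
    (hg : g = EuclideanDomain.gcd (f.comp Q)
      (Polynomial.X ^ Fintype.card F ^ k - Polynomial.X)) :
    (∀ r : Polynomial F, Irreducible r → r ∣ f.comp Q → k ∣ r.natDegree) ∧
    Polynomial.C g.leadingCoeff⁻¹ * g = minpoly F (Polynomial.aeval α P) :=
  stmt_8_general F E k hE P Q hQ f hirr hdeg α hroot g hg
end

section
/- Let P ∈ F_q[x] permute F_{q^k}, let f be monic irreducible of degree k over F_q with root α ∈ F_{q^k}, and let β ∈ F_{q^k} be the unique element with P(β) = α. Then the minimal polynomial of β equals f if and only if f divides x^{q^i} − P(x) in F_q[x] for some 0 ≤ i ≤ k−1; equivalently, if and only if f divides the product over i = 0,...,k−1 of (x^{q^i} − P(x)). -/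
open Polynomial Finset

lemma aux_frob_aeval (F : Type*) [Field F] [Fintype F]
    (E : Type*) [Field E] [Algebra F E]
    (x : E) (g : Polynomial F) (j : ℕ) :
    Polynomial.aeval (x ^ Fintype.card F ^ j) g
      = (Polynomial.aeval x g) ^ Fintype.card F ^ j := by
  obtain ⟨p, hpc⟩ := CharP.exists F
  haveI := hpc
  have hp : p.Prime := CharP.char_is_prime F p
  haveI : Fact p.Prime := ⟨hp⟩
  haveI : CharP E p := charP_of_injective_algebraMap (algebraMap F E).injective p
  haveI : ExpChar E p := ExpChar.prime hp
  obtain ⟨n, -, hcard⟩ := FiniteField.card F p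
  have hpq : p ^ ((n : ℕ) * j) = Fintype.card F ^ j := by rw [hcard, pow_mul]
  set φ := iterateFrobenius E p ((n : ℕ) * j) with hφdef
  have hφ : ∀ y : E, φ y = y ^ Fintype.card F ^ j := by
    intro y; rw [hφdef, iterateFrobenius_def, hpq]
  have hcomp : φ.comp (algebraMap F E) = algebraMap F E := by
    ext c
    simp only [RingHom.comp_apply, hφ, ← map_pow, FiniteField.pow_card_pow]
  calc Polynomial.aeval (x ^ Fintype.card F ^ j) g
      = eval₂ (algebraMap F E) (φ x) g := by rw [aeval_def, hφ]
    _ = eval₂ (φ.comp (algebraMap F E)) (φ x) g := by rw [hcomp]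
    _ = φ (eval₂ (algebraMap F E) x g) := (hom_eval₂ g _ _ x).symm
    _ = (Polynomial.aeval x g) ^ Fintype.card F ^ j := by rw [hφ, aeval_def]

/-- fixed-point characterization. -/
theorem stmt_9 (F : Type*) [Field F] [Fintype F]
    (E : Type*) [Field E] [Algebra F E] [Fintype E]
    (k : ℕ) (hk : 0 < k) (hE : Fintype.card E = Fintype.card F ^ k)
    (P : Polynomial F)
    (hperm : Function.Bijective (fun c : E => Polynomial.aeval c P))
    (f : Polynomial F) (hmonic : f.Monic) (hirr : Irreducible f) (hdeg : f.natDegree = k)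
    (α β : E) (hroot : Polynomial.aeval α f = 0) (hβ : Polynomial.aeval β P = α) :
    (minpoly F β = f ↔ ∃ i < k, f ∣ Polynomial.X ^ Fintype.card F ^ i - P) ∧
    (minpoly F β = f ↔
      f ∣ ∏ i ∈ Finset.range k, (Polynomial.X ^ Fintype.card F ^ i - P)) := by
  classical
  set q := Fintype.card F with hqdef
  have hq1 : 1 < q := Fintype.one_lt_card
  have hq0 : 0 < q := by omega
  have hfrob : ∀ (x : E) (g : Polynomial F) (j : ℕ),
      Polynomial.aeval (x ^ q ^ j) g = (Polynomial.aeval x g) ^ q ^ j :=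
    fun x g j => aux_frob_aeval F E x g j
  have hEpow : ∀ x : E, x ^ q ^ k = x := by
    intro x; rw [← hE]; exact FiniteField.pow_card x
  have hfa : minpoly F α = f := (minpoly.eq_of_irreducible_of_monic hirr hroot hmonic).symm
  have hiter : ∀ (z : E) (m : ℕ), z ^ (q ^ k) ^ m = z := by
    intro z m
    induction m with
    | zero => simp
    | succ t ih => rw [pow_succ, pow_mul, ih, hEpow]
  have hpowinj : ∀ m, Function.Injective (fun x : E => x ^ q ^ m) := by
    intro m x y h
    simp only at h
    have key : ∀ z : E, z ^ (q ^ m) ^ k = z := by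
      intro z
      have h1 : (q ^ m) ^ k = (q ^ k) ^ m := by
        rw [← pow_mul, ← pow_mul, Nat.mul_comm]
      rw [h1]; exact hiter z m
    have he : (q ^ m) ^ k = q ^ m * (q ^ m) ^ (k - 1) := by
      rw [← pow_succ', Nat.sub_add_cancel hk]
    calc x = x ^ (q ^ m) ^ k := (key x).symm
      _ = (x ^ q ^ m) ^ (q ^ m) ^ (k - 1) := by rw [he]; exact pow_mul x _ _
      _ = (y ^ q ^ m) ^ (q ^ m) ^ (k - 1) := by rw [h]
      _ = y ^ (q ^ m) ^ k := by rw [he]; exact (pow_mul y _ _).symm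
      _ = y := key y
  haveI : Module.Finite F E := Module.Finite.of_finite
  have hint : IsIntegral F α := IsIntegral.of_finite F α
  have hfinrank : Module.finrank F E = k := by
    have h1 : Fintype.card E = q ^ Module.finrank F E := Module.card_eq_pow_finrank
    rw [hE] at h1
    exact (Nat.pow_right_injective hq1 h1.symm)
  have hsurj : ∀ x : E, ∃ g : Polynomial F, Polynomial.aeval α g = x := by
    have hA : Algebra.adjoin F {α} = ⊤ := by
      apply Algebra.toSubmodule_eq_top.1
      apply Submodule.eq_top_of_finrank_eq
      rw [(Algebra.adjoin F {α}).finrank_toSubmodule, hfinrank,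
        PowerBasis.finrank (Algebra.adjoin.powerBasis hint),
        Algebra.adjoin.powerBasis_dim, hfa, hdeg]
    intro x
    have hx : x ∈ Algebra.adjoin F {α} := hA ▸ Algebra.mem_top
    rw [Algebra.adjoin_singleton_eq_range_aeval] at hx
    obtain ⟨g, hg⟩ := hx
    exact ⟨g, hg⟩
  have hdcontra : ∀ d, 0 < d → d < k → α ^ q ^ d ≠ α := by
    intro d hd0 hdk hcontr
    have hall : ∀ x : E, x ^ q ^ d = x := by
      intro x
      obtain ⟨g, rfl⟩ := hsurj x
      rw [← hfrob, hcontr]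
    have hd0' : d ≠ 0 := by omega
    have hp0ne : (X ^ q ^ d - X : Polynomial E) ≠ 0 :=
      FiniteField.X_pow_card_pow_sub_X_ne_zero E hd0' hq1
    have hroots : (Finset.univ : Finset E) ⊆ (X ^ q ^ d - X : Polynomial E).roots.toFinset := by
      intro x _
      rw [Multiset.mem_toFinset, mem_roots hp0ne, IsRoot.def]
      simp [hall x]
    have h1 : Fintype.card E ≤ (X ^ q ^ d - X : Polynomial E).roots.toFinset.card := by
      simpa using Finset.card_le_card hroots
    have h2 : (X ^ q ^ d - X : Polynomial E).roots.toFinset.card ≤ q ^ d := by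
      calc (X ^ q ^ d - X : Polynomial E).roots.toFinset.card
          ≤ Multiset.card (X ^ q ^ d - X : Polynomial E).roots := Multiset.toFinset_card_le _
        _ ≤ (X ^ q ^ d - X : Polynomial E).natDegree := Polynomial.card_roots' _
        _ = q ^ d := FiniteField.X_pow_card_pow_sub_X_natDegree_eq E hd0' hq1
    rw [hE] at h1
    have : q ^ k < q ^ k := lt_of_le_of_lt (le_trans h1 h2) (Nat.pow_lt_pow_right hq1 hdk)
    omega
  have hconj_inj : Set.InjOn (fun i => α ^ q ^ i) (Finset.range k) := by
    have key : ∀ i j, i ≤ j → j < k → α ^ q ^ i = α ^ q ^ j → i = j := by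
      intro i j hij hjk heq
      by_contra hne
      have hij' : i < j := lt_of_le_of_ne hij hne
      have h1 : (α ^ q ^ (j - i)) ^ q ^ i = α ^ q ^ i := by
        rw [← pow_mul, ← pow_add, Nat.sub_add_cancel hij]
        exact heq.symm
      have h2 : α ^ q ^ (j - i) = α := hpowinj i h1
      exact hdcontra (j - i) (by omega) (by omega) h2
    intro i hi j hj heq
    simp only [Finset.coe_range, Set.mem_Iio] at hi hj
    rcases le_total i j with h | h
    · exact key i j h hj heq
    · exact (key j i h hi heq.symm).symm
  have hfm0 : f.map (algebraMap F E) ≠ 0 := (hmonic.map (algebraMap F E)).ne_zero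
  have hfmroot : ∀ x : E,
      Polynomial.aeval x f = 0 ↔ x ∈ (f.map (algebraMap F E)).roots.toFinset := by
    intro x
    rw [Multiset.mem_toFinset, mem_roots hfm0, IsRoot.def, eval_map, ← aeval_def]
  have hScard : ((Finset.range k).image (fun i => α ^ q ^ i)).card = k := by
    rw [Finset.card_image_of_injOn hconj_inj, Finset.card_range]
  have hSsub : (Finset.range k).image (fun i => α ^ q ^ i)
      ⊆ (f.map (algebraMap F E)).roots.toFinset := by
    intro x hx
    rw [Finset.mem_image] at hx
    obtain ⟨i, -, rfl⟩ := hx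
    rw [← hfmroot, hfrob, hroot, zero_pow (by positivity)]
  have hSeq : (Finset.range k).image (fun i => α ^ q ^ i)
      = (f.map (algebraMap F E)).roots.toFinset := by
    apply Finset.eq_of_subset_of_card_le hSsub
    rw [hScard]
    calc (f.map (algebraMap F E)).roots.toFinset.card
        ≤ Multiset.card (f.map (algebraMap F E)).roots := Multiset.toFinset_card_le _
      _ ≤ (f.map (algebraMap F E)).natDegree := Polynomial.card_roots' _
      _ = k := by rw [natDegree_map, hdeg]
  have key1 : minpoly F β = f ↔ ∃ i < k, f ∣ X ^ q ^ i - P := by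
    constructor
    · intro h
      have hβf : Polynomial.aeval β f = 0 := by rw [← h]; exact minpoly.aeval F β
      have hβS : β ∈ (Finset.range k).image (fun i => α ^ q ^ i) := by
        rw [hSeq, ← hfmroot]; exact hβf
      rw [Finset.mem_image] at hβS
      obtain ⟨i, hik, hβi⟩ := hβS
      rw [Finset.mem_range] at hik
      have hPα : (Polynomial.aeval α P) ^ q ^ i = α := by
        rw [← hfrob, hβi, hβ]
      rcases Nat.eq_zero_or_pos i with rfl | hi0
      · refine ⟨0, hk, ?_⟩
        rw [← hfa]
        apply minpoly.dvd
        rw [map_sub, aeval_X_pow, sub_eq_zero]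
        simp only [pow_zero, pow_one] at hPα ⊢
        exact hPα.symm
      · refine ⟨k - i, by omega, ?_⟩
        rw [← hfa]
        apply minpoly.dvd
        rw [map_sub, aeval_X_pow, sub_eq_zero]
        have h2 := congrArg (fun z : E => z ^ q ^ (k - i)) hPα
        rw [← pow_mul, ← pow_add, Nat.add_sub_cancel' (le_of_lt hik), hEpow] at h2
        exact h2.symm
    · rintro ⟨i, hik, hdvd⟩
      have hα0 : Polynomial.aeval α (X ^ q ^ i - P) = 0 := by
        obtain ⟨c, hc⟩ := hdvd
        rw [hc, map_mul, hroot, zero_mul]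
      rw [map_sub, aeval_X_pow, sub_eq_zero] at hα0
      have hγ : Polynomial.aeval (α ^ q ^ (k - i)) P = α := by
        rw [hfrob, ← hα0, ← pow_mul, ← pow_add, Nat.add_sub_cancel' (le_of_lt hik)]
        exact hEpow α
      have hβγ : β = α ^ q ^ (k - i) := hperm.injective (by
        show Polynomial.aeval β P = Polynomial.aeval (α ^ q ^ (k - i)) P
        rw [hβ, hγ])
      have hβf : Polynomial.aeval β f = 0 := by
        rw [hβγ, hfrob, hroot, zero_pow (by positivity)]
      exact (minpoly.eq_of_irreducible_of_monic hirr hβf hmonic).symm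
  have hprime : Prime f := UniqueFactorizationMonoid.irreducible_iff_prime.mp hirr
  refine ⟨key1, key1.trans ?_⟩
  constructor
  · rintro ⟨i, hik, hdvd⟩
    exact hdvd.trans (Finset.dvd_prod_of_mem _ (Finset.mem_range.mpr hik))
  · intro h
    obtain ⟨i, hi, hdvd⟩ := (Prime.dvd_finset_prod_iff hprime _).mp h
    exact ⟨i, Finset.mem_range.mp hi, hdvd⟩
end

section
/- Let f be a monic irreducible polynomial of degree k over F_q with constant coefficient a_0 (so the norm of any root α of f over F_q equals (−1)^k a_0 = α^{(q^k−1)/(q−1)}). Let n be coprime to q^k − 1 with n ≡ 1 (mod q − 1), and let β ∈ F_{q^k} satisfy β^n = α. Then the minimal polynomial of β has the same constant coefficient as f. -/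
open Polynomial IntermediateField
open scoped IntermediateField

private lemma norm_eq_of_adjoin_eq_top {F E : Type*} [Field F] [Field E] [Algebra F E]
    [FiniteDimensional F E] {x : E} (h : F⟮x⟯ = ⊤) :
    Algebra.norm F x = (-1) ^ (minpoly F x).natDegree * (minpoly F x).coeff 0 := by
  have hint : IsIntegral F x := IsIntegral.of_finite F x
  let pb := (IntermediateField.adjoin.powerBasis hint).map
    ((IntermediateField.equivOfEq h).trans IntermediateField.topEquiv)
  have hgen : pb.gen = x := by
    simp [pb, PowerBasis.map_gen, IntermediateField.adjoin.powerBasis]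
  have hdim : pb.dim = (minpoly F x).natDegree := by
    simp [pb, IntermediateField.adjoin.powerBasis]
  have := Algebra.PowerBasis.norm_gen_eq_coeff_zero_minpoly pb
  rwa [hgen, hdim] at this

/-- if `n ≡ 1 (mod q-1)` then the norm (constant coefficient) is preserved. -/
theorem stmt_11 (F : Type*) [Field F] [Fintype F]
    (E : Type*) [Field E] [Algebra F E] [Fintype E]
    (k : ℕ) (hk : 0 < k) (hE : Fintype.card E = Fintype.card F ^ k)
    (f : Polynomial F) (hmonic : f.Monic) (hirr : Irreducible f) (hdeg : f.natDegree = k)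
    (n : ℕ) (hn : 0 < n) (hcop : Nat.Coprime n (Fintype.card F ^ k - 1))
    (hmod : n ≡ 1 [MOD Fintype.card F - 1])
    (α β : E) (hroot : Polynomial.aeval α f = 0) (hβ : β ^ n = α) :
    (minpoly F β).coeff 0 = f.coeff 0 := by
  have hfd : FiniteDimensional F E := Module.Finite.of_finite
  have hcard : 1 < Fintype.card F := Fintype.one_lt_card
  have hfin : Module.finrank F E = k := by
    have := Module.card_eq_pow_finrank (K := F) (V := E)
    rw [hE] at this
    exact (Nat.pow_right_injective hcard this.symm)
  have hminα : minpoly F α = f := (minpoly.eq_of_irreducible_of_monic hirr hroot hmonic).symm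
  have hαtop : F⟮α⟯ = ⊤ := by
    rw [Field.primitive_element_iff_minpoly_natDegree_eq, hminα, hdeg, hfin]
  have hβtop : F⟮β⟯ = ⊤ := by
    have hle : F⟮α⟯ ≤ F⟮β⟯ := by
      rw [IntermediateField.adjoin_simple_le_iff, ← hβ]
      exact pow_mem (IntermediateField.mem_adjoin_simple_self F β) n
    rw [hαtop] at hle
    exact top_le_iff.mp hle
  have hdegβ : (minpoly F β).natDegree = k := by
    rw [← hfin, ← Field.primitive_element_iff_minpoly_natDegree_eq]
    exact hβtop
  -- norms
  have hnormα := norm_eq_of_adjoin_eq_top hαtop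
  have hnormβ := norm_eq_of_adjoin_eq_top hβtop
  rw [hminα, hdeg] at hnormα
  rw [hdegβ] at hnormβ
  -- x ^ n = x in F
  have hpow : ∀ x : F, x ^ n = x := by
    intro x
    rcases eq_or_ne x 0 with rfl | hx
    · simp [hn.ne']
    · have hdvd : (Fintype.card F - 1) ∣ n - 1 :=
        (Nat.modEq_iff_dvd' hn).mp hmod.symm
      obtain ⟨m, hm⟩ := hdvd
      have : x ^ (n - 1) = 1 := by
        rw [hm, pow_mul, FiniteField.pow_card_sub_one_eq_one x hx, one_pow]
      calc x ^ n = x ^ (n - 1 + 1) := by rw [Nat.sub_add_cancel hn]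
        _ = x := by rw [pow_succ, this, one_mul]
  have hnn : Algebra.norm F β = Algebra.norm F α := by
    rw [← hβ, map_pow, hpow]
  rw [hnormα, hnormβ] at hnn
  exact mul_left_cancel₀ (pow_ne_zero k (neg_ne_zero.mpr one_ne_zero)) hnn
end

section
/- Let P ∈ F_q[x] permute F_{q^k}, let α be an element of F_{q^k} of degree k over F_q, let i be the least positive integer with P^{(i)}(α) = α (i-fold composition), and let j be the length of the orbit of the minimal polynomial m_α under the induced permutation f ↦ P ∗ f of monic irreducibles of degree k. Then j divides i, and i divides j·k; in particular i/k ≤ j ≤ i. -/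
open Polynomial

private lemma aux_dvd_of_min {γ : Type*} (f : γ → γ) (x : γ) {i : ℕ}
    (hfix : f^[i] x = x) (hi : 0 < i)
    (hmin : ∀ m, 0 < m → f^[m] x = x → i ≤ m) {n : ℕ} (hn : f^[n] x = x) : i ∣ n := by
  rcases Nat.eq_zero_or_pos (n % i) with h | h
  · exact Nat.dvd_of_mod_eq_zero h
  · have h2 : f^[i * (n / i)] x = x := by
      rw [Function.iterate_mul]; exact Function.iterate_fixed hfix _
    have h1 : f^[n % i] x = x := by
      calc f^[n % i] x = f^[n % i] (f^[i * (n / i)] x) := by rw [h2]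
        _ = f^[n % i + i * (n / i)] x := (Function.iterate_add_apply _ _ _ _).symm
        _ = f^[n] x := by rw [Nat.mod_add_div]
        _ = x := hn
    exact absurd (hmin _ h h1) (not_le.2 (Nat.mod_lt _ hi))

section Aux

variable {F : Type*} [Field F] [Fintype F] {E : Type*} [Field E] [Algebra F E] [Fintype E]

/-- The `q`-power map on `E` is a ring homomorphism. -/
private lemma aux_exists_hom (F : Type*) [Field F] [Fintype F] (E : Type*) [Field E]
    [Algebra F E] : ∃ h : E →+* E, ∀ x : E, h x = x ^ Fintype.card F := by
  obtain ⟨p, hc⟩ := CharP.exists F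
  haveI := hc
  have hp : p.Prime := CharP.char_is_prime F p
  haveI := Fact.mk hp
  haveI : CharP E p := charP_of_injective_algebraMap (algebraMap F E).injective p
  haveI : ExpChar E p := .prime hp
  obtain ⟨n, -, hn⟩ := FiniteField.card F p
  exact ⟨iterateFrobenius E p n, fun x => by rw [iterateFrobenius_def, hn]⟩

private lemma aux_pow_iter (q : ℕ) (t : ℕ) (x : E) :
    (fun z : E => z ^ q)^[t] x = x ^ q ^ t := by
  induction t with
  | zero => simp
  | succ t ih => rw [Function.iterate_succ_apply', ih, ← pow_mul, pow_succ]

private lemma aux_aeval_comm (Q : Polynomial F) (x : E) :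
    Polynomial.aeval (x ^ Fintype.card F) Q = (Polynomial.aeval x Q) ^ Fintype.card F := by
  obtain ⟨h, hh⟩ := aux_exists_hom F E
  have hfix : h.comp (algebraMap F E) = algebraMap F E := by
    ext c
    rw [RingHom.comp_apply, hh, ← map_pow, FiniteField.pow_card]
  calc Polynomial.aeval (x ^ Fintype.card F) Q
      = eval₂ (algebraMap F E) (x ^ Fintype.card F) Q := by rw [aeval_def]
    _ = eval₂ (h.comp (algebraMap F E)) (h x) Q := by rw [hfix, hh]
    _ = h (eval₂ (algebraMap F E) x Q) := (hom_eval₂ _ _ _ _).symm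
    _ = (Polynomial.aeval x Q) ^ Fintype.card F := by rw [← hh, aeval_def]

/-- Minimal period of Frobenius on an element of degree `k` is at least `k`. -/
private lemma aux_min_period {k : ℕ} (α : E) (hα : (minpoly F α).natDegree = k)
    {t : ℕ} (ht : 0 < t) (hfix : α ^ Fintype.card F ^ t = α) : k ≤ t := by
  classical
  have hq1 : 1 < Fintype.card F := Fintype.one_lt_card
  obtain ⟨h, hh⟩ := aux_exists_hom F E
  have hint : IsIntegral F α := .of_finite F α
  set K := IntermediateField.adjoin F {α} with hK
  letI : Fintype K := Fintype.ofFinite K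
  have hfin : Module.finrank F K = k := by
    rw [hK, IntermediateField.adjoin.finrank hint, hα]
  have hcard : Fintype.card K = Fintype.card F ^ k := by
    rw [Module.card_eq_pow_finrank (K := F) (V := K), hfin]
  have hhiter : ∀ (s : ℕ) (z : E), (h ^ s) z = z ^ Fintype.card F ^ s := by
    intro s z
    have : (⇑h : E → E) = fun z : E => z ^ Fintype.card F := funext hh
    rw [RingHom.coe_pow, this, aux_pow_iter]
  have hall : ∀ z : E, z ∈ K → z ^ Fintype.card F ^ t = z := by
    intro z hz
    rw [← hhiter t z]
    induction hz using IntermediateField.adjoin_induction with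
    | mem x hx =>
      rcases hx with rfl
      rw [hhiter]; exact hfix
    | algebraMap c =>
      rw [hhiter, ← aux_pow_iter, Function.iterate_fixed]
      rw [← map_pow, FiniteField.pow_card]
    | add x y hx hy ihx ihy => rw [map_add, ihx, ihy]
    | inv x hx ihx => rw [map_inv₀, ihx]
    | mul x y hx hy ihx ihy => rw [map_mul, ihx, ihy]
  -- all elements of K are roots of X ^ q ^ t - X
  set g : Polynomial E := X ^ (Fintype.card F ^ t) - X with hg
  have hdeg : g.natDegree = Fintype.card F ^ t := by
    rw [hg, natDegree_sub_eq_left_of_natDegree_lt, natDegree_X_pow]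
    rw [natDegree_X_pow, natDegree_X]
    calc 1 < Fintype.card F := hq1
      _ = Fintype.card F ^ 1 := (pow_one _).symm
      _ ≤ Fintype.card F ^ t := Nat.pow_le_pow_right (le_of_lt hq1) ht
  have hg0 : g ≠ 0 := by
    intro h0
    rw [h0, natDegree_zero] at hdeg
    exact (pow_pos Fintype.card_pos t).ne' hdeg.symm
  have hroot : ∀ z : E, z ∈ K → z ∈ g.roots.toFinset := by
    intro z hz
    rw [Multiset.mem_toFinset, mem_roots hg0]
    simp only [hg, IsRoot.def, eval_sub, eval_pow, eval_X]
    rw [hall z hz, sub_self]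
  have hinj : Function.Injective (fun z : K => (⟨(z : E), hroot z z.2⟩ :
      {y // y ∈ g.roots.toFinset})) := by
    intro a b hab
    have : ((⟨(a : E), hroot a a.2⟩ : {y // y ∈ g.roots.toFinset}) : E) =
        ((⟨(b : E), hroot b b.2⟩ : {y // y ∈ g.roots.toFinset}) : E) := congrArg Subtype.val hab
    exact Subtype.ext this
  have hle : Fintype.card K ≤ g.roots.toFinset.card := by
    calc Fintype.card K ≤ Fintype.card {y // y ∈ g.roots.toFinset} :=
          Fintype.card_le_of_injective _ hinj
      _ = g.roots.toFinset.card := Fintype.card_coe _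
  have hle2 : (g.roots.toFinset.card : ℕ) ≤ Fintype.card F ^ t := by
    calc g.roots.toFinset.card ≤ Multiset.card g.roots := g.roots.toFinset_card_le
      _ ≤ g.natDegree := g.card_roots'
      _ = Fintype.card F ^ t := hdeg
  have : Fintype.card F ^ k ≤ Fintype.card F ^ t := by
    rw [← hcard]; exact le_trans hle hle2
  exact (Nat.pow_le_pow_iff_right hq1).mp this

/-- Conjugates are Frobenius powers. -/
private lemma aux_conj {k : ℕ} (hk : 0 < k) (hE : Fintype.card E = Fintype.card F ^ k)
    (α : E) (hα : (minpoly F α).natDegree = k) (y : E) (hy : minpoly F y = minpoly F α) :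
    ∃ t : ℕ, y = α ^ Fintype.card F ^ t := by
  have hint : IsIntegral F α := .of_finite F α
  set m := minpoly F α with hm
  set mE := m.map (algebraMap F E) with hmE
  have hmon : m.Monic := minpoly.monic hint
  have hmE0 : mE ≠ 0 := (hmon.map (algebraMap F E)).ne_zero
  have hmEdeg : mE.natDegree = k := by
    rw [hmE, natDegree_map, hα]
  -- all Frobenius powers of α are roots of mE
  have hrootpow : ∀ t : ℕ, Polynomial.aeval (α ^ Fintype.card F ^ t) m = 0 := by
    intro t
    induction t with
    | zero =>
      rw [pow_zero, pow_one]
      exact minpoly.aeval F α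
    | succ t ih =>
      have : α ^ Fintype.card F ^ (t + 1) = (α ^ Fintype.card F ^ t) ^ Fintype.card F := by
        rw [← pow_mul, pow_succ]
      rw [this, aux_aeval_comm, ih, zero_pow Fintype.card_pos.ne']
  classical
  -- injectivity of t ↦ α ^ q ^ t on range k
  have key : ∀ s t : ℕ, s < t → t < k →
      α ^ Fintype.card F ^ s = α ^ Fintype.card F ^ t → False := by
    intro s t hlt htk hst
    have h1 : α ^ Fintype.card F ^ (s + (k - t)) = α := by
      have h2 := congrArg (fun z : E => z ^ Fintype.card F ^ (k - t)) hst
      simp only [← pow_mul, ← pow_add] at h2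
      have h3 : t + (k - t) = k := by omega
      rw [h3] at h2
      rw [h2, ← hE]
      exact FiniteField.pow_card α
    have := aux_min_period α hα (t := s + (k - t)) (by omega) h1
    omega
  have hinj : Set.InjOn (fun t : ℕ => α ^ Fintype.card F ^ t) (Finset.range k) := by
    intro s hs t ht hst
    simp only [Finset.coe_range, Set.mem_Iio] at hs ht
    simp only at hst
    rcases lt_trichotomy s t with h | h | h
    · exact (key s t h ht hst).elim
    · exact h
    · exact (key t s h hs hst.symm).elim
  set S : Finset E := (Finset.range k).image (fun t => α ^ Fintype.card F ^ t) with hS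
  have hScard : S.card = k := by
    rw [hS, Finset.card_image_of_injOn hinj, Finset.card_range]
  have hSsub : S ⊆ mE.roots.toFinset := by
    intro z hz
    rw [hS, Finset.mem_image] at hz
    obtain ⟨t, -, rfl⟩ := hz
    rw [Multiset.mem_toFinset, mem_roots hmE0, IsRoot.def, hmE, eval_map, ← aeval_def]
    exact hrootpow t
  have hcardle : mE.roots.toFinset.card ≤ k := by
    calc mE.roots.toFinset.card ≤ Multiset.card mE.roots := mE.roots.toFinset_card_le
      _ ≤ mE.natDegree := mE.card_roots'
      _ = k := hmEdeg
  have hSeq : S = mE.roots.toFinset :=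
    Finset.eq_of_subset_of_card_le hSsub (by rw [hScard]; exact hcardle)
  have hyroot : y ∈ mE.roots.toFinset := by
    rw [Multiset.mem_toFinset, mem_roots hmE0, IsRoot.def, hmE, eval_map, ← aeval_def]
    rw [← hy]
    exact minpoly.aeval F y
  rw [← hSeq, hS, Finset.mem_image] at hyroot
  obtain ⟨t, -, ht⟩ := hyroot
  exact ⟨t, ht.symm⟩

/-- the preimage under `P` of an element of degree `k` has degree `k`. -/
private lemma aux_deg_step {k : ℕ} (hE : Fintype.card E = Fintype.card F ^ k)
    (P : Polynomial F) (x β : E) (hβ : Polynomial.aeval β P = x)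
    (hx : (minpoly F x).natDegree = k) : (minpoly F β).natDegree = k := by
  have hq1 : 1 < Fintype.card F := Fintype.one_lt_card
  have hfr : Module.finrank F E = k := by
    have h1 := Module.card_eq_pow_finrank (K := F) (V := E)
    rw [hE] at h1
    exact Nat.pow_right_injective hq1 h1.symm
  have hle : (minpoly F β).natDegree ≤ k := hfr ▸ minpoly.natDegree_le β
  have hmem : x ∈ IntermediateField.adjoin F {β} := by
    rw [← hβ]
    exact IntermediateField.algebra_adjoin_le_adjoin F {β}
      (Polynomial.aeval_mem_adjoin_singleton F β)
  have hsub : IntermediateField.adjoin F {x} ≤ IntermediateField.adjoin F {β} :=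
    IntermediateField.adjoin_simple_le_iff.mpr hmem
  have hge : k ≤ (minpoly F β).natDegree := by
    have h1 : Module.finrank F (IntermediateField.adjoin F {x}) = k := by
      rw [IntermediateField.adjoin.finrank (.of_finite F x), hx]
    have h2 : Module.finrank F (IntermediateField.adjoin F {β}) = (minpoly F β).natDegree :=
      IntermediateField.adjoin.finrank (.of_finite F β)
    rw [← h1, ← h2]
    have h3 : (IntermediateField.adjoin F {x}).toSubmodule ≤
        (IntermediateField.adjoin F {β}).toSubmodule := hsub
    exact Submodule.finrank_mono h3
  omega

end Aux

/-- relation between the period of `α ∈ C_k` under the evaluation map of `P`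
and the period of `m_α` under the induced permutation `f ↦ P ∗ f` of `I_k`. -/
theorem stmt_14 (F : Type*) [Field F] [Fintype F]
    (E : Type*) [Field E] [Algebra F E] [Fintype E]
    (k : ℕ) (hk : 0 < k) (hE : Fintype.card E = Fintype.card F ^ k)
    (P : Polynomial F)
    (hperm : Function.Bijective (fun c : E => Polynomial.aeval c P))
    (D : Polynomial F → Polynomial F)
    (hD : ∀ f : Polynomial F, f.Monic → Irreducible f → f.natDegree = k →
      ∀ γ δ : E, Polynomial.aeval γ f = 0 → Polynomial.aeval δ P = γ →
        D f = minpoly F δ)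
    (α : E) (hα : (minpoly F α).natDegree = k)
    (i : ℕ) (hi : 0 < i) (hiper : (fun c : E => Polynomial.aeval c P)^[i] α = α)
    (himin : ∀ m, 0 < m → (fun c : E => Polynomial.aeval c P)^[m] α = α → i ≤ m)
    (j : ℕ) (hj : 0 < j) (hjper : D^[j] (minpoly F α) = minpoly F α)
    (hjmin : ∀ m, 0 < m → D^[m] (minpoly F α) = minpoly F α → j ≤ m) :
    j ∣ i ∧ i ∣ j * k ∧ i ≤ j * k ∧ j ≤ i := by
  set g := fun c : E => Polynomial.aeval c P with hg
  set e : E ≃ E := Equiv.ofBijective g hperm with he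
  have hgapp : ∀ z : E, e z = Polynomial.aeval z P := fun z => rfl
  have hiterfm : ∀ n : ℕ, D^[n] (minpoly F α) = minpoly F (e.symm^[n] α) ∧
      (minpoly F (e.symm^[n] α)).natDegree = k := by
    intro n
    induction n with
    | zero => exact ⟨rfl, hα⟩
    | succ n ih =>
      obtain ⟨ih1, ih2⟩ := ih
      set γ := e.symm^[n] α with hγ
      have hint : IsIntegral F γ := .of_finite F γ
      have hδ : Polynomial.aeval (e.symm γ) P = γ := by
        rw [← hgapp]; exact e.apply_symm_apply γ
      have hstep : D (minpoly F γ) = minpoly F (e.symm γ) :=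
        hD (minpoly F γ) (minpoly.monic hint) (minpoly.irreducible hint) ih2 γ (e.symm γ)
          (minpoly.aeval F γ) hδ
      refine ⟨?_, ?_⟩
      · rw [Function.iterate_succ_apply', ih1, hstep, Function.iterate_succ_apply']
      · rw [Function.iterate_succ_apply']
        exact aux_deg_step hE P γ (e.symm γ) hδ ih2
  have hsymm_iter : ∀ (n : ℕ) (z : E), e.symm^[n] (e^[n] z) = z := by
    intro n
    induction n with
    | zero => intro z; rfl
    | succ n ih =>
      intro z
      rw [Function.iterate_succ_apply' (⇑e), Function.iterate_succ_apply (⇑e.symm),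
        e.symm_apply_apply]
      exact ih z
  have hiter_symm : ∀ (n : ℕ) (z : E), e^[n] (e.symm^[n] z) = z := by
    intro n
    induction n with
    | zero => intro z; rfl
    | succ n ih =>
      intro z
      rw [Function.iterate_succ_apply' (⇑e.symm), Function.iterate_succ_apply (⇑e),
        e.apply_symm_apply]
      exact ih z
  have hefix : e^[i] α = α := hiper
  have hsymfix_i : e.symm^[i] α = α := by
    calc e.symm^[i] α = e.symm^[i] (e^[i] α) := by rw [hefix]
      _ = α := hsymm_iter i α
  have hDi : D^[i] (minpoly F α) = minpoly F α := by
    rw [(hiterfm i).1, hsymfix_i]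
  have hjdvd : j ∣ i := aux_dvd_of_min D (minpoly F α) hjper hj hjmin hDi
  obtain ⟨t, ht⟩ := aux_conj hk hE α hα (e.symm^[j] α) (by rw [← (hiterfm j).1, hjper])
  have hcomm : ∀ z : E, e.symm (z ^ Fintype.card F) = (e.symm z) ^ Fintype.card F := by
    intro z
    apply e.injective
    rw [e.apply_symm_apply, hgapp, aux_aeval_comm, ← hgapp, e.apply_symm_apply]
  have hc : Function.Commute (⇑e.symm) (fun z : E => z ^ Fintype.card F) :=
    fun z => hcomm z
  have hcjs : ∀ (s : ℕ) (z : E), e.symm^[j] (z ^ Fintype.card F ^ s)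
      = (e.symm^[j] z) ^ Fintype.card F ^ s := by
    intro s z
    have h2 := (hc.iterate_iterate j s) z
    rwa [aux_pow_iter, aux_pow_iter] at h2
  have hnj : ∀ n : ℕ, e.symm^[n * j] α = α ^ Fintype.card F ^ (n * t) := by
    intro n
    induction n with
    | zero => simp
    | succ n ih =>
      have h1 : (n + 1) * j = j + n * j := by ring
      rw [h1, Function.iterate_add_apply, ih, hcjs, ht, ← pow_mul, ← pow_add]
      have h2 : t + n * t = (n + 1) * t := by ring
      rw [h2]
  have hkj : e.symm^[k * j] α = α := by
    rw [hnj k, ← aux_pow_iter, Function.iterate_mul]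
    refine Function.iterate_fixed ?_ t
    rw [aux_pow_iter, ← hE]
    exact FiniteField.pow_card α
  have hifix : e^[k * j] α = α := by
    calc e^[k * j] α = e^[k * j] (e.symm^[k * j] α) := by rw [hkj]
      _ = α := hiter_symm _ _
  have hidvd : i ∣ j * k :=
    aux_dvd_of_min g α hiper hi himin
      (show g^[j * k] α = α by rw [show j * k = k * j from mul_comm j k]; exact hifix)
  exact ⟨hjdvd, hidvd, Nat.le_of_dvd (mul_pos hj hk) hidvd, Nat.le_of_dvd hi hjdvd⟩
end

section
/- Let P ∈ F_q[x] permute F_{q^k} and let α ∈ F_{q^k} have degree k over F_q. If the minimal polynomial m_α satisfies P ∗ m_α = m_α (i.e., m_α divides x^{q^i} − P(x) for some 0 ≤ i ≤ k−1), then P^{(k)}(α) = α, where P^{(k)} denotes the k-fold iterate of the evaluation map of P. -/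
open Polynomial

/-- Key step: raising to the `card F`-th power commutes with evaluating a polynomial
over `F`. -/
lemma aux_pow_card_aeval (F : Type*) [Field F] [Fintype F]
    (E : Type*) [Field E] [Algebra F E] (P : Polynomial F) (x : E) :
    (Polynomial.aeval x P) ^ Fintype.card F = Polynomial.aeval (x ^ Fintype.card F) P := by
  set p := ringChar F with hp
  haveI : CharP F p := ringChar.charP F
  haveI hpp : Fact p.Prime := ⟨CharP.char_is_prime F p⟩
  haveI : CharP E p := charP_of_injective_algebraMap (algebraMap F E).injective p
  obtain ⟨n, hnp, hcard⟩ := FiniteField.card F p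
  set g : E →+* E := iterateFrobenius E p n with hg
  have hgdef : ∀ y : E, g y = y ^ Fintype.card F := by
    intro y; rw [hg, iterateFrobenius_def, hcard]
  have hcomp : g.comp (algebraMap F E) = algebraMap F E := by
    ext c
    simp only [RingHom.comp_apply, hgdef, ← map_pow, FiniteField.pow_card]
  calc (Polynomial.aeval x P) ^ Fintype.card F = g (Polynomial.aeval x P) := (hgdef _).symm
    _ = Polynomial.eval₂ (g.comp (algebraMap F E)) (g x) P := by
        rw [Polynomial.aeval_def, Polynomial.hom_eval₂]
    _ = Polynomial.aeval (x ^ Fintype.card F) P := by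
        rw [hcomp, hgdef, Polynomial.aeval_def]

lemma aux_pow_card_pow_aeval (F : Type*) [Field F] [Fintype F]
    (E : Type*) [Field E] [Algebra F E] (P : Polynomial F) (x : E) (m : ℕ) :
    (Polynomial.aeval x P) ^ Fintype.card F ^ m
      = Polynomial.aeval (x ^ Fintype.card F ^ m) P := by
  induction m with
  | zero => simp
  | succ m ih =>
      rw [pow_succ, pow_mul, ih, aux_pow_card_aeval, pow_mul]

/-- if `m_α` is fixed by `P` (i.e. divides `x^{q^i} - P(x)` for some
`0 ≤ i ≤ k-1`), then `P^{(k)}(α) = α`. -/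
theorem stmt_15 (F : Type*) [Field F] [Fintype F]
    (E : Type*) [Field E] [Algebra F E] [Fintype E]
    (k : ℕ) (hk : 0 < k) (hE : Fintype.card E = Fintype.card F ^ k)
    (P : Polynomial F)
    (hperm : Function.Bijective (fun c : E => Polynomial.aeval c P))
    (α : E) (hα : (minpoly F α).natDegree = k)
    (hfix : ∃ i < k, minpoly F α ∣ Polynomial.X ^ Fintype.card F ^ i - P) :
    (fun c : E => Polynomial.aeval c P)^[k] α = α := by
  obtain ⟨i, hik, hdvd⟩ := hfix
  set q := Fintype.card F with hq
  have h0 : Polynomial.aeval α ((Polynomial.X : Polynomial F) ^ q ^ i - P) = 0 := by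
    obtain ⟨c, hc⟩ := hdvd
    rw [hc, map_mul, minpoly.aeval, zero_mul]
  have hPα : Polynomial.aeval α P = α ^ q ^ i := by
    rw [map_sub, map_pow, Polynomial.aeval_X, sub_eq_zero] at h0
    exact h0.symm
  have key : ∀ j : ℕ, (fun c : E => Polynomial.aeval c P)^[j] α = α ^ (q ^ i) ^ j := by
    intro j
    induction j with
    | zero => simp
    | succ j ih =>
        rw [Function.iterate_succ_apply', ih]
        show Polynomial.aeval (α ^ (q ^ i) ^ j) P = _
        rw [← pow_mul, ← pow_mul, ← aux_pow_card_pow_aeval, hPα, ← pow_mul, ← pow_add]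
        congr 1
        ring
  rw [key k]
  have hcardE : ∀ x : E, x ^ q ^ k = x := by
    intro x
    have := FiniteField.pow_card x
    rwa [hE] at this
  have hfin : ∀ (m : ℕ) (x : E), x ^ (q ^ k) ^ m = x := by
    intro m
    induction m with
    | zero => simp
    | succ m ih => intro x; rw [pow_succ, pow_mul, ih x, hcardE]
  have : (q ^ i) ^ k = (q ^ k) ^ i := by ring
  rw [this, hfin i α]
end

section
/- Let g ∈ F_q[x] with gcd(g, x^k − 1) = 1 and L_g its q-associate. Let α ∈ F_{q^k} have F_q-order h ∈ F_q[x] (the minimal monic polynomial with L_h(α) = 0). Then the least positive integer j with L_g^{(j)}(α) = α equals the multiplicative order of g modulo h, i.e., the least j > 0 with g^j ≡ 1 (mod h) in F_q[x]. -/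
open Polynomial

/-- Evaluation of the `q`-associate (linearized) polynomial `L_g(x) = Σ aᵢ x^{qⁱ}` at `α`. -/
noncomputable def qAssocEval (F : Type*) [Field F] [Fintype F]
    (E : Type*) [Field E] [Algebra F E] (g : Polynomial F) (α : E) : E :=
  ∑ i ∈ Finset.range (g.natDegree + 1), g.coeff i • α ^ (Fintype.card F) ^ i

/-!
`L_g` is `g` evaluated at the `q`-Frobenius `φ`, viewed as an `F`-linear endomorphism of `E`; so
`L_g^{(j)} = g(φ)^j = (g^j)(φ)`, and `L_{g^j}(α) = α` says that `g^j - 1` annihilates `α` in the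
`F[X]`-module structure given by `φ`. The annihilator of `α` is an ideal of `F[X]`, generated by
its monic element of least degree, which is `h`.
-/

section Annihilator

variable {K M : Type*} [Field K] [AddCommGroup M] [Module K M] (φ : Module.End K M) {v : M}
  {h : K[X]}

theorem dvd_of_aeval_apply_eq_zero (hmonic : h.Monic) (hann : aeval φ h v = 0)
    (hmin : ∀ m : K[X], m.Monic → aeval φ m v = 0 → h.degree ≤ m.degree)
    {m : K[X]} (hm : aeval φ m v = 0) : h ∣ m := by
  rw [← modByMonic_eq_zero_iff_dvd hmonic]
  by_contra hr
  have hr_ann : aeval φ (m %ₘ h) v = 0 := by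
    rw [modByMonic_eq_sub_mul_div m h, mul_comm, map_sub, map_mul, LinearMap.sub_apply,
      Module.End.mul_apply, hann, hm, map_zero, sub_zero]
  have hle : h.degree ≤ (m %ₘ h).degree := by
    rw [← degree_mul_leadingCoeff_inv (m %ₘ h) hr]
    refine hmin _ (monic_mul_leadingCoeff_inv hr) ?_
    rw [mul_comm, map_mul, Module.End.mul_apply, hr_ann, map_zero]
  exact (degree_modByMonic_lt m hmonic).not_ge hle

theorem aeval_apply_eq_self_iff_dvd (hmonic : h.Monic) (hann : aeval φ h v = 0)
    (hmin : ∀ m : K[X], m.Monic → aeval φ m v = 0 → h.degree ≤ m.degree) (p : K[X]) :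
    aeval φ p v = v ↔ h ∣ p - 1 := by
  have hsub : aeval φ (p - 1) v = aeval φ p v - v := by
    rw [map_sub, map_one, LinearMap.sub_apply, Module.End.one_apply]
  constructor
  · intro hp
    exact dvd_of_aeval_apply_eq_zero φ hmonic hann hmin (by rw [hsub, hp, sub_self])
  · rintro ⟨s, hs⟩
    rw [← sub_eq_zero, ← hsub, hs, mul_comm, map_mul, Module.End.mul_apply, hann, map_zero]

theorem iterate_aeval_apply (g : K[X]) (j : ℕ) (x : M) :
    (aeval φ g)^[j] x = aeval φ (g ^ j) x := by
  rw [map_pow, Module.End.pow_apply]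

end Annihilator

theorem qAssocEval_eq_aeval_frobenius (F : Type*) [Field F] [Fintype F]
    (E : Type*) [Field E] [Algebra F E] (g : F[X]) :
    qAssocEval F E g = aeval (FiniteField.frobeniusAlgHom F E).toLinearMap g := by
  ext α
  rw [aeval_eq_sum_range, qAssocEval]
  simp only [LinearMap.sum_apply, LinearMap.smul_apply, Module.End.pow_apply,
    AlgHom.coe_toLinearMap, FiniteField.coe_frobeniusAlgHom, pow_iterate]

theorem stmt_17_general (F : Type*) [Field F] [Fintype F]
    (E : Type*) [Field E] [Algebra F E]
    (g : Polynomial F)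
    (α : E)
    (h : Polynomial F) (hmonic : h.Monic) (hann : qAssocEval F E h α = 0)
    (hmin : ∀ m : Polynomial F, m.Monic → qAssocEval F E m α = 0 → h.degree ≤ m.degree) :
    ∀ j : ℕ, 0 < j → ((qAssocEval F E g)^[j] α = α ↔ h ∣ g ^ j - 1) := by
  intro j _
  simp only [qAssocEval_eq_aeval_frobenius] at hann hmin ⊢
  rw [iterate_aeval_apply]
  exact aeval_apply_eq_self_iff_dvd _ hmonic hann hmin _

/-- the period of `α` under `L_g` equals the multiplicative order of `g`
modulo the `F_q`-order `h` of `α`: for each `j > 0`, `L_g^{(j)}(α) = α` iff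
`g^j ≡ 1 (mod h)`. -/
theorem stmt_17 (F : Type*) [Field F] [Fintype F]
    (E : Type*) [Field E] [Algebra F E] [Fintype E]
    (k : ℕ) (hk : 0 < k) (hE : Fintype.card E = Fintype.card F ^ k)
    (g : Polynomial F) (hcop : IsCoprime g (Polynomial.X ^ k - 1))
    (α : E)
    (h : Polynomial F) (hmonic : h.Monic) (hann : qAssocEval F E h α = 0)
    (hmin : ∀ m : Polynomial F, m.Monic → qAssocEval F E m α = 0 → h.degree ≤ m.degree) :
    ∀ j : ℕ, 0 < j → ((qAssocEval F E g)^[j] α = α ↔ h ∣ g ^ j - 1) :=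
  stmt_17_general F E g α h hmonic hann hmin
end

section
/- Let k ≥ 3, A ∈ GL_2(F_q) with γ_A(z) = (az+b)/(cz+d), and let D be the order of the class of A in PGL_2(F_q). Suppose f is a monic irreducible polynomial of degree k over F_q fixed by the induced action, i.e., f(x) = c_f (cx + d)^k f((ax+b)/(cx+d)) for the appropriate normalizing constant c_f ∈ F_q^*. Then D divides k. -/
/-!
Adjoin a root `α` of `f`. The fixedness of `f` says that `β = (aα + b)/(cα + d)` is again a root
of `f`, so some `σ ∈ Gal(F(α)/F)` sends `α` to `β`. Since `σ` fixes the coefficients of `A`, it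
commutes with the Möbius map `γ_A`, hence `σᵐ α = γ_{Aᵐ} α` for all `m`. The Galois group has
order `k`, so `γ_{Aᵏ}` fixes `α`; a fixed point of a non-scalar Möbius map is a root of a nonzero
polynomial of degree at most `2 < k`, so `Aᵏ` is scalar.
-/

open Polynomial

theorem Polynomial.aeval_div_mul_pow_eq_sum {R K : Type*} [CommRing R] [Field K] [Algebra R K]
    (p : R[X]) {n : ℕ} (hn : p.natDegree ≤ n) (u : K) {v : K} (hv : v ≠ 0) :
    aeval (u / v) p * v ^ n =
      ∑ i ∈ Finset.range (n + 1), algebraMap R K (p.coeff i) * u ^ i * v ^ (n - i) := by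
  rw [aeval_eq_sum_range' (Nat.lt_succ_of_le hn), Finset.sum_mul]
  refine Finset.sum_congr rfl fun i hi => ?_
  have hvn : v ^ n = v ^ i * v ^ (n - i) := by
    rw [← pow_add, Nat.add_sub_cancel' (Nat.lt_succ_iff.mp (Finset.mem_range.mp hi))]
  rw [Algebra.smul_def, div_pow, hvn, mul_assoc, ← mul_assoc (u ^ i / v ^ i),
    div_mul_cancel₀ _ (pow_ne_zero _ hv), mul_assoc]

theorem minpoly.eq_zero_of_natDegree_lt {A B : Type*} [Field A] [Ring B] [Algebra A B] {x : B}
    {p : A[X]} (hp : p.natDegree < (minpoly A x).natDegree) (hx : Polynomial.aeval x p = 0) :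
    p = 0 := by
  by_contra hp0
  have := natDegree_le_natDegree (minpoly.degree_le_of_ne_zero A x hp0 hx)
  omega

theorem minpoly.algebraMap_mul_add_algebraMap_ne_zero {A B : Type*} [Field A] [Ring B]
    [Algebra A B] {x : B} (hx : 1 < (minpoly A x).natDegree) {c d : A} (hcd : c ≠ 0 ∨ d ≠ 0) :
    algebraMap A B c * x + algebraMap A B d ≠ 0 := by
  intro h
  have hp : C c * X + C d = 0 := by
    refine minpoly.eq_zero_of_natDegree_lt (lt_of_le_of_lt ?_ hx) (by simpa using h)
    compute_degree
  have hc : c = 0 := by simpa using congrArg (coeff · 1) hp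
  have hd : d = 0 := by simpa using congrArg (coeff · 0) hp
  tauto

namespace AdjoinRoot

variable {F : Type*} [Field F] {f : F[X]}

theorem natDegree_minpoly_root (hf : f ≠ 0) :
    (minpoly F (root f)).natDegree = f.natDegree := by
  rw [minpoly_root hf, natDegree_mul_C (inv_ne_zero (leadingCoeff_ne_zero.mpr hf))]

theorem exists_algEquiv_root_eq [Fact (Irreducible f)] {β : AdjoinRoot f} (hβ : aeval β f = 0) :
    ∃ σ : AdjoinRoot f ≃ₐ[F] AdjoinRoot f, σ (root f) = β := by
  have := (powerBasis (Fact.out : Irreducible f).ne_zero).finite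
  exact ⟨.ofBijective (liftAlgHom f (Algebra.ofId F _) β hβ) (AlgHom.bijective _),
    liftAlgHom_root f _ β hβ⟩

theorem algEquiv_pow_natDegree_eq_one [Finite F] [Fact (Irreducible f)]
    (σ : AdjoinRoot f ≃ₐ[F] AdjoinRoot f) : σ ^ f.natDegree = 1 := by
  have hf := (Fact.out : Irreducible f).ne_zero
  have := (powerBasis hf).finite
  have : Finite (AdjoinRoot f) := Module.finite_of_finite F
  rw [← powerBasis_dim hf, ← (powerBasis hf).finrank, ← IsGalois.card_aut_eq_finrank]
  exact pow_card_eq_one'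

end AdjoinRoot

section Mobius

variable {F K L : Type*} [Field F] [CommRing K] [Algebra F K] [CommRing L] [Algebra F L]

/-- Division-free form of `y = (M₀₀ x + M₀₁) / (M₁₀ x + M₁₁)`. -/
def MobiusMapsTo (M : Matrix (Fin 2) (Fin 2) F) (x y : K) : Prop :=
  ∃ t : K, algebraMap F K (M 0 0) * x + algebraMap F K (M 0 1) = t * y ∧
    algebraMap F K (M 1 0) * x + algebraMap F K (M 1 1) = t

namespace MobiusMapsTo

theorem mul {M N : Matrix (Fin 2) (Fin 2) F} {x y z : K} (hM : MobiusMapsTo M x y)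
    (hN : MobiusMapsTo N y z) : MobiusMapsTo (N * M) x z := by
  obtain ⟨s, hs₀, hs₁⟩ := hM
  obtain ⟨t, ht₀, ht₁⟩ := hN
  refine ⟨s * t, ?_, ?_⟩ <;>
    simp only [Matrix.mul_apply, Fin.sum_univ_two, map_add, map_mul]
  · linear_combination algebraMap F K (N 0 0) * hs₀ + algebraMap F K (N 0 1) * hs₁ + s * ht₀
  · linear_combination algebraMap F K (N 1 0) * hs₀ + algebraMap F K (N 1 1) * hs₁ + s * ht₁

theorem map {M : Matrix (Fin 2) (Fin 2) F} {x y : K} (h : MobiusMapsTo M x y) (φ : K →ₐ[F] L) :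
    MobiusMapsTo M (φ x) (φ y) := by
  obtain ⟨t, h₀, h₁⟩ := h
  refine ⟨φ t, ?_, ?_⟩
  · simpa only [map_add, map_mul, AlgHom.commutes] using congrArg φ h₀
  · simpa only [map_add, map_mul, AlgHom.commutes] using congrArg φ h₁

theorem pow_of_algEquiv {M : Matrix (Fin 2) (Fin 2) F} {x : K} (σ : K ≃ₐ[F] K)
    (h : MobiusMapsTo M x (σ x)) (m : ℕ) : MobiusMapsTo (M ^ m) x ((σ ^ m) x) := by
  induction m with
  | zero => exact ⟨1, by simp, by simp⟩
  | succ m ih =>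
    rw [pow_succ, pow_succ', AlgEquiv.mul_apply]
    exact h.mul (ih.map (σ : K →ₐ[F] K))

theorem eq_scalar_of_self {M : Matrix (Fin 2) (Fin 2) F} {x : K} (h : MobiusMapsTo M x x)
    (hx : 2 < (minpoly F x).natDegree) : M = Matrix.scalar (Fin 2) (M 0 0) := by
  obtain ⟨t, h₀, h₁⟩ := h
  set p : F[X] := C (M 1 0) * X ^ 2 + C (M 1 1 - M 0 0) * X - C (M 0 1)
  have hp : p = 0 := by
    refine minpoly.eq_zero_of_natDegree_lt (lt_of_le_of_lt ?_ hx) ?_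
    · simp only [p]; compute_degree
    · simp only [p, map_add, map_sub, map_mul, map_pow, aeval_C, aeval_X]
      linear_combination x * h₁ - h₀
  have h₁₀ : M 1 0 = 0 := by simpa [p] using congrArg (coeff · 2) hp
  have h₀₁ : M 0 1 = 0 := by simpa [p] using congrArg (coeff · 0) hp
  have h₁₁ : M 1 1 = M 0 0 := by simpa [p, sub_eq_zero] using congrArg (coeff · 1) hp
  ext i j
  fin_cases i <;> fin_cases j <;> simp [h₁₀, h₀₁, h₁₁]

end MobiusMapsTo

end Mobius

theorem Matrix.GeneralLinearGroup.orderOf_mk_center_dvd {n R : Type*} [Fintype n]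
    [DecidableEq n] [CommRing R] {A : GL n R} {k : ℕ} {r : R}
    (h : ((A ^ k : GL n R) : Matrix n n R) = Matrix.scalar n r) :
    orderOf (QuotientGroup.mk A : GL n R ⧸ Subgroup.center (GL n R)) ∣ k := by
  apply orderOf_dvd_of_pow_eq_one
  rw [← QuotientGroup.mk_pow, QuotientGroup.eq_one_iff,
    Matrix.GeneralLinearGroup.mem_center_iff_val_mem_range_scalar]
  exact ⟨r, h.symm⟩

theorem stmt_19_general (F : Type*) [Field F] [Fintype F]
    (k : ℕ) (hk : 3 ≤ k)
    (A : GL (Fin 2) F)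
    (a b c d : F)
    (ha : a = (A : Matrix (Fin 2) (Fin 2) F) 0 0)
    (hb : b = (A : Matrix (Fin 2) (Fin 2) F) 0 1)
    (hc : c = (A : Matrix (Fin 2) (Fin 2) F) 1 0)
    (hd : d = (A : Matrix (Fin 2) (Fin 2) F) 1 1)
    (D : ℕ)
    (hD : D = orderOf (QuotientGroup.mk A :
      GL (Fin 2) F ⧸ Subgroup.center (GL (Fin 2) F)))
    (f : Polynomial F) (hirr : Irreducible f) (hdeg : f.natDegree = k)
    (cf : F) (hcf : cf ≠ 0)
    (hfix : Polynomial.C cf *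
      (∑ i ∈ Finset.range (k + 1), Polynomial.C (f.coeff i) *
        (Polynomial.C a * Polynomial.X + Polynomial.C b) ^ i *
        (Polynomial.C c * Polynomial.X + Polynomial.C d) ^ (k - i)) = f) :
    D ∣ k := by
  subst ha hb hc hd hD
  have := Fact.mk hirr
  obtain ⟨M, hM⟩ : ∃ M : Matrix (Fin 2) (Fin 2) F, ↑A = M := ⟨_, rfl⟩
  simp only [hM] at hfix
  set α := AdjoinRoot.root f
  set ι := algebraMap F (AdjoinRoot f)
  have hα : (minpoly F α).natDegree = k := hdeg ▸ AdjoinRoot.natDegree_minpoly_root hirr.ne_zero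
  have hv : ι (M 1 0) * α + ι (M 1 1) ≠ 0 := by
    refine minpoly.algebraMap_mul_add_algebraMap_ne_zero (by omega) ?_
    by_contra! h
    exact (Matrix.isUnit_iff_isUnit_det M).mp (hM ▸ A.isUnit) |>.ne_zero <| by
      simp [Matrix.det_fin_two, h.1, h.2]
  set β := (ι (M 0 0) * α + ι (M 0 1)) / (ι (M 1 0) * α + ι (M 1 1))
  have hβ : aeval β f = 0 := by
    have h := congrArg (aeval α) hfix
    simp only [map_mul, map_sum, map_pow, map_add, aeval_C, aeval_X] at h
    rw [AdjoinRoot.aeval_eq, AdjoinRoot.mk_self] at h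
    rw [← hdeg, ← aeval_div_mul_pow_eq_sum f le_rfl _ hv] at h
    simpa only [mul_eq_zero, map_eq_zero, hcf, pow_eq_zero_iff', hv, false_or, false_and,
      or_false] using h
  obtain ⟨σ, hσ⟩ := AdjoinRoot.exists_algEquiv_root_eq hβ
  have hA : MobiusMapsTo M α (σ α) := ⟨_, by rw [hσ, mul_div_cancel₀ _ hv], rfl⟩
  have hAk := hA.pow_of_algEquiv σ k
  rw [← hdeg, AdjoinRoot.algEquiv_pow_natDegree_eq_one, AlgEquiv.one_apply, hdeg] at hAk
  refine Matrix.GeneralLinearGroup.orderOf_mk_center_dvd (r := (M ^ k) 0 0) ?_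
  rw [Units.val_pow_eq_pow_val, hM]
  exact hAk.eq_scalar_of_self (by omega)

/-- if a monic irreducible `f` of degree `k ≥ 3` over `F_q` is fixed by the
Möbius action of `A ∈ GL₂(F_q)`, i.e. `f = c_f · (cx+d)^k f((ax+b)/(cx+d))`, then the order
`D` of the class of `A` in `PGL₂(F_q)` divides `k`. (Here `(cx+d)^k f((ax+b)/(cx+d))` is the
polynomial `Σ fᵢ (ax+b)^i (cx+d)^{k-i}`.) -/
theorem stmt_19 (F : Type*) [Field F] [Fintype F]
    (k : ℕ) (hk : 3 ≤ k)
    (A : GL (Fin 2) F)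
    (a b c d : F)
    (ha : a = (A : Matrix (Fin 2) (Fin 2) F) 0 0)
    (hb : b = (A : Matrix (Fin 2) (Fin 2) F) 0 1)
    (hc : c = (A : Matrix (Fin 2) (Fin 2) F) 1 0)
    (hd : d = (A : Matrix (Fin 2) (Fin 2) F) 1 1)
    (D : ℕ)
    (hD : D = orderOf (QuotientGroup.mk A :
      GL (Fin 2) F ⧸ Subgroup.center (GL (Fin 2) F)))
    (f : Polynomial F) (hmonic : f.Monic) (hirr : Irreducible f) (hdeg : f.natDegree = k)
    (cf : F) (hcf : cf ≠ 0)
    (hfix : Polynomial.C cf *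
      (∑ i ∈ Finset.range (k + 1), Polynomial.C (f.coeff i) *
        (Polynomial.C a * Polynomial.X + Polynomial.C b) ^ i *
        (Polynomial.C c * Polynomial.X + Polynomial.C d) ^ (k - i)) = f) :
    D ∣ k :=
  stmt_19_general F k hk A a b c d ha hb hc hd D hD f hirr hdeg cf hcf hfix
end
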